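/- arXiv:2104.00257 — 6 statements merged into one kernel-verified Lean document; each statement's English description precedes it below -/
import Mathlib

section
/- Let n = p + q + z with p ≥ 1, q ≥ 1, z ≥ 0, and let J = diag(I_p, −I_q, 0_z) ∈ ℂ^{n×n}. Let A, B ∈ ℂ^{n×n} be Hermitian and suppose there exists an invertible U ∈ ℂ^{n×n} with Uᴴ B U = J and Uᴴ A U = diag(a₁, …, aₙ) where all a_i ≥ 0 and a_{p+1} ≤ a_{p+2} ≤ … ≤ a_{p+q} (so the negative-type finite eigenvalues of the pencil A − λB are λ_i⁻ = −a_{p+i}, i = 1,…,q, with λ₁⁻ ≥ λ₂⁻ ≥ …). Let 1 ≤ k ≤ q and let D ∈ ℂ^{k×k} be Hermitian positive semi-definite with eigenvalues ω₁ ≥ ω₂ ≥ … ≥ ω_k ≥ 0. Then the real number Σ_{i=1}^{k} ω_i a_{p+i} (which equals −Σ_{i=1}^{k} ω_i λ_i⁻) is the minimum (a lower bound that is attained) of the set { t ∈ ℝ : ∃ X ∈ ℂ^{n×k}, Xᴴ B X = −I_k and t = Re(trace(D Xᴴ A X)) }. -/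
open Matrix BigOperators
open scoped ComplexOrder
open Finset

/-! Substituting `X = U W Qᴴ` turns the problem into minimizing `∑ₗ ωₗ ∑ᵢ aᵢ |Wᵢₗ|²` over the `W`
with `Wᴴ J W = -I`, and the minimum is attained at the columns `e_{p+1}, …, e_{p+k}`. For the lower
bound, the rows `p + r, …, p + q - 1` of the first `j` columns of `W` carry mass at least `j - r`:
on the kernel of the rank `≤ r` part of `Wᴴ J W` coming from the rows `p, …, p + r - 1`, the
constraint forces the remaining negative rows to carry at least the norm of the coefficient vector.
Abel summation, once against the decreasing `ω` and once against the increasing `a_{p+·}`, turns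
these mass bounds into the claim. -/

namespace Fin

variable {R : Type*} [CommRing R] [PartialOrder R] [IsOrderedRing R]

theorem sum_mul_le_sum_mul_of_antitone {n : ℕ} {f x y : Fin n → R} (hf : Antitone f)
    (hf0 : 0 ≤ f) (hxy : ∀ j, ∑ i ∈ Iic j, x i ≤ ∑ i ∈ Iic j, y i) :
    ∑ i, f i * x i ≤ ∑ i, f i * y i := by
  induction n with
  | zero => simp
  | succ n ih =>
    have split (g : Fin (n + 1) → R) : ∑ i, f i * g i
        = ∑ i : Fin n, (f i.castSucc - f (last n)) * g i.castSucc + f (last n) * ∑ i, g i := by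
      simp only [sum_univ_castSucc, sub_mul, sum_sub_distrib, mul_add, mul_sum]
      ring
    have hinit : ∑ i : Fin n, (f i.castSucc - f (last n)) * x i.castSucc
        ≤ ∑ i : Fin n, (f i.castSucc - f (last n)) * y i.castSucc := by
      refine ih (fun i j hij => sub_le_sub_right (hf (castSucc_le_castSucc_iff.2 hij)) _)
        (fun i => sub_nonneg.2 (hf (le_last _))) fun j => ?_
      simpa [← map_castSuccEmb_Iic, sum_map] using hxy j.castSucc
    have htotal : ∑ i, x i ≤ ∑ i, y i := by
      simpa [← top_eq_last, Iic_top] using hxy (last n)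
    rw [split, split]
    exact add_le_add hinit (mul_le_mul_of_nonneg_left htotal (hf0 _))

theorem sum_mul_le_sum_mul_of_monotone {n : ℕ} {f x y : Fin n → R} (hf : Monotone f)
    (hf0 : 0 ≤ f) (hxy : ∀ j, ∑ i ∈ Ici j, x i ≤ ∑ i ∈ Ici j, y i) :
    ∑ i, f i * x i ≤ ∑ i, f i * y i := by
  rw [← Equiv.sum_comp revPerm, ← Equiv.sum_comp revPerm (fun i => f i * y i)]
  refine sum_mul_le_sum_mul_of_antitone (hf.comp_antitone rev_anti) (fun i => hf0 (rev i))
    fun j => ?_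
  simpa [← map_revPerm_Iic, sum_map] using hxy j.rev

end Fin

theorem sum_mul_castLE_le_sum_mul_sum_mul {R : Type*} [CommRing R] [PartialOrder R]
    [IsOrderedRing R] {q k : ℕ} (hkq : k ≤ q) {b : Fin q → R} {ω : Fin k → R}
    (hb : Monotone b) (hb0 : 0 ≤ b) (hω : Antitone ω) (hω0 : 0 ≤ ω) {T : Fin q → Fin k → R}
    (hT0 : 0 ≤ T)
    (hT : ∀ (r : Fin q) (j : Fin k),
      ((j : ℕ) + 1 : R) - (r : ℕ) ≤ ∑ s ∈ Ici r, ∑ l ∈ Iic j, T s l) :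
    ∑ l, ω l * b (Fin.castLE hkq l) ≤ ∑ l, ω l * ∑ s, b s * T s l := by
  refine Fin.sum_mul_le_sum_mul_of_antitone hω hω0 fun j => ?_
  have hleft : ∑ l ∈ Iic j, b (Fin.castLE hkq l)
      = ∑ s, b s * if s ∈ Iic (Fin.castLE hkq j) then 1 else 0 := by
    simp only [mul_boole, sum_ite_mem, univ_inter, ← Fin.map_castLEEmb_Iic, sum_map]
    rfl
  have hright : ∑ l ∈ Iic j, ∑ s, b s * T s l = ∑ s, b s * ∑ l ∈ Iic j, T s l := by
    rw [sum_comm]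
    simp only [mul_sum]
  rw [hleft, hright]
  refine Fin.sum_mul_le_sum_mul_of_monotone hb hb0 fun r => ?_
  have hIcc : Ici r ∩ Iic (Fin.castLE hkq j) = Icc r (Fin.castLE hkq j) := by ext; simp
  rw [sum_boole, filter_mem_eq_inter, hIcc, Fin.card_Icc, Fin.val_castLE]
  rcases le_or_gt (r : ℕ) (j + 1) with hrj | hrj
  · rw [Nat.cast_sub hrj]
    push_cast
    exact hT r j
  · rw [Nat.sub_eq_zero_of_le hrj.le, Nat.cast_zero]
    exact sum_nonneg fun s _ => sum_nonneg fun l _ => hT0 s l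

namespace Matrix

section Semiring

variable {α ι κ : Type*} [Semiring α] [StarRing α] [Fintype ι]

theorem conjTranspose_submatrix_mul_mul_submatrix {κ' : Type*} [Fintype κ] (W : Matrix ι κ α)
    (C : Matrix ι ι α) (e : κ' → κ) :
    (W.submatrix id e)ᴴ * C * W.submatrix id e = (Wᴴ * C * W).submatrix e e := by
  rw [submatrix_mul _ _ _ id _ Function.bijective_id,
    submatrix_mul _ _ _ id _ Function.bijective_id, conjTranspose_submatrix, submatrix_id_id]

theorem conjTranspose_submatrix_one_mul_diagonal_mul_submatrix_one [DecidableEq ι]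
    [DecidableEq κ] (e : κ ↪ ι) (d : ι → α) :
    ((1 : Matrix ι ι α).submatrix id e)ᴴ * diagonal d * (1 : Matrix ι ι α).submatrix id e
      = diagonal (d ∘ e) := by
  rw [conjTranspose_submatrix_mul_mul_submatrix, conjTranspose_one, Matrix.one_mul,
    Matrix.mul_one, submatrix_diagonal_embedding]

end Semiring

theorem mul_mul_conjTranspose_eq_neg_one_iff {α κ : Type*} [CommRing α] [StarRing α]
    [Fintype κ] [DecidableEq κ] {Q M : Matrix κ κ α} (hQ : Qᴴ * Q = 1) :
    Q * M * Qᴴ = -1 ↔ M = -1 := by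
  have hQQ : Q * Qᴴ = 1 := mul_eq_one_comm.mp hQ
  refine ⟨fun h => ?_, fun h => by rw [h, Matrix.mul_neg, Matrix.mul_one, Matrix.neg_mul, hQQ]⟩
  calc M = Qᴴ * (Q * M * Qᴴ) * Q := by
        rw [← Matrix.mul_assoc, ← Matrix.mul_assoc, hQ, Matrix.one_mul, Matrix.mul_assoc, hQ,
          Matrix.mul_one]
    _ = -1 := by rw [h, Matrix.mul_neg, Matrix.mul_one, Matrix.neg_mul, hQ]

variable {𝕜 ι κ : Type*} [RCLike 𝕜] [Fintype ι] [DecidableEq ι]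

theorem re_conjTranspose_mul_diagonal_mul_apply_self (W : Matrix ι κ 𝕜) (d : ι → ℝ) (l : κ) :
    RCLike.re ((Wᴴ * diagonal (fun i => (d i : 𝕜)) * W) l l) = ∑ i, d i * ‖W i l‖ ^ 2 := by
  rw [mul_apply, map_sum]
  refine sum_congr rfl fun i _ => ?_
  rw [mul_diagonal, conjTranspose_apply, mul_right_comm, RCLike.star_def, RCLike.conj_mul]
  norm_cast
  ring

theorem re_trace_mul_mul_mul_conjTranspose {D Q : Matrix ι ι 𝕜} {ω : ι → ℝ}
    (hQD : Qᴴ * D * Q = diagonal fun i => (ω i : 𝕜)) (M : Matrix ι ι 𝕜) :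
    RCLike.re (D * (Q * M * Qᴴ)).trace = ∑ i, ω i * RCLike.re (M i i) := by
  rw [← Matrix.mul_assoc, trace_mul_comm, ← Matrix.mul_assoc, ← Matrix.mul_assoc, hQD, trace,
    map_sum]
  simp [diagonal_mul]

-- In an eigenbasis of `N`, every diagonal entry of `M` is nonnegative, and those on the kernel
-- of `N` are at least `1`.
theorem card_sub_rank_le_re_trace {M G N : Matrix ι ι 𝕜} (hM : M.PosSemidef)
    (hG : G.PosSemidef) (hN : N.IsHermitian) (hMGN : M = 1 + G - N) :
    (Fintype.card ι : ℝ) - N.rank ≤ RCLike.re M.trace := by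
  set V : Matrix ι ι 𝕜 := (hN.eigenvectorUnitary : Matrix ι ι 𝕜)
  have hVV : Vᴴ * V = 1 := by simp [V, ← star_eq_conjTranspose]
  have hVV' : V * Vᴴ = 1 := by simp [V, ← star_eq_conjTranspose]
  have hVN : Vᴴ * N * V = diagonal (RCLike.ofReal ∘ hN.eigenvalues) := by
    simpa [Unitary.conjStarAlgAut_apply, V, star_eq_conjTranspose]
      using hN.conjStarAlgAut_star_eigenvectorUnitary
  have hdiag (i : ι) :
      (if hN.eigenvalues i = 0 then 1 else 0 : ℝ) ≤ RCLike.re ((Vᴴ * M * V) i i) := by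
    split_ifs with h
    · have hM' : Vᴴ * M * V = 1 + Vᴴ * G * V - Vᴴ * N * V := by
        rw [hMGN, Matrix.mul_sub, Matrix.mul_add, Matrix.sub_mul, Matrix.add_mul, Matrix.mul_one,
          hVV, Matrix.mul_assoc, Matrix.mul_assoc]
      have := RCLike.nonneg_iff.1 ((hG.conjTranspose_mul_mul_same V).diag_nonneg (i := i))
      simp [hM', hVN, h, this.1]
    · exact (RCLike.nonneg_iff.1 ((hM.conjTranspose_mul_mul_same V).diag_nonneg (i := i))).1
  have hrank : N.rank + #{i | hN.eigenvalues i = 0} = Fintype.card ι := by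
    rw [hN.rank_eq_card_non_zero_eigs, Fintype.card_subtype, add_comm,
      card_filter_add_card_filter_not, card_univ]
  calc (Fintype.card ι : ℝ) - N.rank = ∑ i, if hN.eigenvalues i = 0 then 1 else 0 := by
        rw [sum_boole, ← hrank]; push_cast; ring
    _ ≤ ∑ i, RCLike.re ((Vᴴ * M * V) i i) := sum_le_sum fun i _ => hdiag i
    _ = RCLike.re (Vᴴ * M * V).trace := by rw [trace, map_sum]; rfl
    _ = RCLike.re M.trace := by rw [trace_mul_cycle, hVV', Matrix.one_mul]

-- Split `diagonal j` as `G₀ - N₀ - P_S`, with `G₀ ⪰ 0`, `N₀ ⪰ 0` supported on the negative entries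
-- off `S` and `P_S` the projection onto `S`; then `Wᴴ P_S W = 1 + Wᴴ G₀ W - Wᴴ N₀ W`.
theorem card_sub_le_sum_sum_norm_sq [Fintype κ] [DecidableEq κ] (W : Matrix ι κ 𝕜) (j : ι → ℝ)
    (S : Finset ι) (hS : ∀ i ∈ S, j i = -1)
    (hW : Wᴴ * diagonal (fun i => (j i : 𝕜)) * W = -1) :
    (Fintype.card κ : ℝ) - #{i | i ∉ S ∧ j i < 0} ≤ ∑ l, ∑ i ∈ S, ‖W i l‖ ^ 2 := by
  set s : ι → ℝ := fun i => if i ∈ S then 1 else 0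
  set g : ι → ℝ := fun i => if i ∈ S then 0 else max (j i) 0
  set n : ι → ℝ := fun i => if i ∈ S then 0 else max (-j i) 0
  have hpsd {d : ι → ℝ} (hd : 0 ≤ d) : (Wᴴ * diagonal (fun i => (d i : 𝕜)) * W).PosSemidef :=
    (PosSemidef.diagonal fun i => RCLike.ofReal_nonneg.2 (hd i)).conjTranspose_mul_mul_same W
  have hj : diagonal (fun i => (j i : 𝕜)) = diagonal (fun i => (g i : 𝕜))
      - diagonal (fun i => (n i : 𝕜)) - diagonal (fun i => (s i : 𝕜)) := by
    rw [diagonal_sub, diagonal_sub]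
    congr 1
    funext i
    by_cases hi : i ∈ S
    · simp [s, g, n, hi, hS i hi]
    · rcases le_total (j i) 0 with h | h <;> simp [s, g, n, hi, h]
  have hMGN : Wᴴ * diagonal (fun i => (s i : 𝕜)) * W
      = 1 + Wᴴ * diagonal (fun i => (g i : 𝕜)) * W - Wᴴ * diagonal (fun i => (n i : 𝕜)) * W := by
    rw [hj, Matrix.mul_sub, Matrix.mul_sub, Matrix.sub_mul, Matrix.sub_mul] at hW
    rw [← neg_neg (1 : Matrix κ κ 𝕜), ← hW]
    abel
  have hrank : (Wᴴ * diagonal (fun i => (n i : 𝕜)) * W).rank ≤ #{i | i ∉ S ∧ j i < 0} := by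
    refine (rank_mul_le_left _ _).trans <| (rank_mul_le_right _ _).trans_eq ?_
    rw [rank_diagonal, Fintype.card_subtype]
    congr 1
    ext i
    by_cases hi : i ∈ S <;> simp [n, hi]
  calc (Fintype.card κ : ℝ) - #{i | i ∉ S ∧ j i < 0}
      ≤ (Fintype.card κ : ℝ) - (Wᴴ * diagonal (fun i => (n i : 𝕜)) * W).rank := by
        gcongr
    _ ≤ RCLike.re (Wᴴ * diagonal (fun i => (s i : 𝕜)) * W).trace :=
        card_sub_rank_le_re_trace (hpsd fun i => by positivity) (hpsd fun i => by positivity)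
          (hpsd fun i => by positivity).isHermitian hMGN
    _ = ∑ l, ∑ i ∈ S, ‖W i l‖ ^ 2 := by
        simp only [trace, diag_apply, map_sum, re_conjTranspose_mul_diagonal_mul_apply_self, s,
          ite_mul, one_mul, zero_mul, sum_ite_mem, univ_inter]

end Matrix

def inertiaSign (p q z : ℕ) (i : Fin (p + q + z)) : ℝ :=
  if (i : ℕ) < p then 1 else if (i : ℕ) < p + q then -1 else 0

def negIndex (p z : ℕ) {q : ℕ} : Fin q ↪ Fin (p + q + z) :=
  (Fin.natAddEmb p).trans (Fin.castAddEmb z)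

@[simp] theorem val_negIndex (p z : ℕ) {q : ℕ} (s : Fin q) : (negIndex p z s : ℕ) = p + s := rfl

@[simp] theorem inertiaSign_negIndex (p z : ℕ) {q : ℕ} (s : Fin q) :
    inertiaSign p q z (negIndex p z s) = -1 := by
  simp [inertiaSign]

section Inertia

variable {𝕜 : Type*} [RCLike 𝕜] {p q z : ℕ}

theorem ofReal_inertiaSign (i : Fin (p + q + z)) :
    (inertiaSign p q z i : 𝕜) = if (i : ℕ) < p then 1 else if (i : ℕ) < p + q then -1 else 0 := by
  unfold inertiaSign
  split_ifs <;> simp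

theorem card_sub_le_sum_sum_norm_sq_negIndex {κ : Type*} [Fintype κ] [DecidableEq κ]
    (W : Matrix (Fin (p + q + z)) κ 𝕜)
    (hW : Wᴴ * diagonal (fun i => (inertiaSign p q z i : 𝕜)) * W = -1) (r : Fin q) :
    (Fintype.card κ : ℝ) - r ≤ ∑ l, ∑ s ∈ Ici r, ‖W (negIndex p z s) l‖ ^ 2 := by
  have hS : ∀ i ∈ (Ici r).map (negIndex p z), inertiaSign p q z i = -1 := by
    simp
  have hcard : #{i | i ∉ (Ici r).map (negIndex p z) ∧ inertiaSign p q z i < 0} ≤ (r : ℕ) := by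
    refine (card_le_card (t := (Iio r).map (negIndex p z)) fun i hi => ?_).trans_eq (by simp)
    simp only [mem_filter, mem_univ, true_and, mem_map, mem_Ici, not_exists, not_and] at hi
    obtain ⟨hiS, hneg⟩ := hi
    have hi : p ≤ (i : ℕ) ∧ (i : ℕ) < p + q := by
      unfold inertiaSign at hneg
      split_ifs at hneg <;> norm_num at hneg; omega
    have hs : negIndex p z ⟨i - p, by omega⟩ = i := Fin.ext (by simp; omega)
    refine mem_map.2 ⟨⟨i - p, by omega⟩, mem_Iio.2 ?_, hs⟩
    by_contra! h
    exact hiS _ h hs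
  calc (Fintype.card κ : ℝ) - r
      ≤ Fintype.card κ - #{i | i ∉ (Ici r).map (negIndex p z) ∧ inertiaSign p q z i < 0} := by
        gcongr
    _ ≤ _ := card_sub_le_sum_sum_norm_sq W _ _ hS hW
    _ = _ := by simp only [sum_map]

theorem sub_le_sum_Ici_sum_Iic_norm_sq {k : ℕ} (W : Matrix (Fin (p + q + z)) (Fin k) 𝕜)
    (hW : Wᴴ * diagonal (fun i => (inertiaSign p q z i : 𝕜)) * W = -1) (r : Fin q) (j : Fin k) :
    ((j : ℕ) + 1 : ℝ) - (r : ℕ) ≤ ∑ s ∈ Ici r, ∑ l ∈ Iic j, ‖W (negIndex p z s) l‖ ^ 2 := by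
  have hWj : (W.submatrix id ((↑) : Iic j → Fin k))ᴴ
      * diagonal (fun i => (inertiaSign p q z i : 𝕜)) * W.submatrix id ((↑) : Iic j → Fin k)
      = -1 := by
    rw [conjTranspose_submatrix_mul_mul_submatrix, hW]
    exact congrArg Neg.neg (submatrix_one _ Subtype.val_injective)
  have := card_sub_le_sum_sum_norm_sq_negIndex _ hWj r
  rw [Fintype.card_coe, Fin.card_Iic, sum_comm] at this
  push_cast at this
  refine this.trans_eq (sum_congr rfl fun s _ => ?_)
  exact sum_coe_sort (Iic j) fun l => ‖W (negIndex p z s) l‖ ^ 2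

theorem sum_mul_le_sum_mul_sum_norm_sq {k : ℕ} (hkq : k ≤ q)
    (W : Matrix (Fin (p + q + z)) (Fin k) 𝕜)
    (hW : Wᴴ * diagonal (fun i => (inertiaSign p q z i : 𝕜)) * W = -1)
    {a : Fin (p + q + z) → ℝ} (ha : 0 ≤ a) (hsort : Monotone (a ∘ negIndex p z))
    {ω : Fin k → ℝ} (hω : Antitone ω) (hω0 : 0 ≤ ω) :
    ∑ l, ω l * a (negIndex p z (Fin.castLE hkq l)) ≤ ∑ l, ω l * ∑ i, a i * ‖W i l‖ ^ 2 := by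
  calc ∑ l, ω l * a (negIndex p z (Fin.castLE hkq l))
      ≤ ∑ l, ω l * ∑ s, a (negIndex p z s) * ‖W (negIndex p z s) l‖ ^ 2 :=
        sum_mul_castLE_le_sum_mul_sum_mul hkq hsort (fun s => ha _) hω hω0
          (T := fun s l => ‖W (negIndex p z s) l‖ ^ 2)
          (fun s l => by positivity) (sub_le_sum_Ici_sum_Iic_norm_sq W hW)
    _ ≤ ∑ l, ω l * ∑ i, a i * ‖W i l‖ ^ 2 := by
        gcongr with l _
        · exact hω0 l
        rw [← sum_map univ (negIndex p z) fun i => a i * ‖W i l‖ ^ 2]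
        exact sum_le_univ_sum_of_nonneg fun i => mul_nonneg (ha i) (sq_nonneg _)

end Inertia

/-- The paper's Corollary 3.2 in the diagonalizable case: with
`Uᴴ B U = J = diag(I_p, -I_q, 0_z)`, `Uᴴ A U = diag(a₁,…,aₙ) ⪰ 0`, the entries
`a_{p+1} ≤ … ≤ a_{p+q}` being the negatives of the negative-type eigenvalues,
`D ⪰ 0` Hermitian with eigenvalues `ω₁ ≥ … ≥ ω_k ≥ 0` and `k ≤ q`, the quantity
`∑ ω_i a_{p+i} = -∑ ω_i λ_i⁻` is the minimum of `Re(trace (D Xᴴ A X))` over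
`Xᴴ B X = -I_k`. -/
theorem trace_inf_indefinite_B_neg_constraint
    (p q z k : ℕ) (hkq : k ≤ q)
    (A B : Matrix (Fin (p + q + z)) (Fin (p + q + z)) ℂ)
    (U : Matrix (Fin (p + q + z)) (Fin (p + q + z)) ℂ) (hU : IsUnit U)
    (a : Fin (p + q + z) → ℝ) (ha : ∀ i, 0 ≤ a i)
    (hsort : ∀ i j : Fin (p + q + z), p ≤ (i : ℕ) → i ≤ j → (j : ℕ) < p + q → a i ≤ a j)
    (hUB : Uᴴ * B * U = Matrix.diagonal fun i : Fin (p + q + z) =>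
      if (i : ℕ) < p then (1 : ℂ) else if (i : ℕ) < p + q then -1 else 0)
    (hUA : Uᴴ * A * U = Matrix.diagonal fun i => (a i : ℂ))
    (D : Matrix (Fin k) (Fin k) ℂ)
    (Q : Matrix (Fin k) (Fin k) ℂ) (hQ : Qᴴ * Q = 1)
    (ω : Fin k → ℝ) (hω : Antitone ω) (hω0 : ∀ i, 0 ≤ ω i)
    (hQD : Qᴴ * D * Q = Matrix.diagonal fun i => (ω i : ℂ)) :
    IsLeast {t : ℝ | ∃ X : Matrix (Fin (p + q + z)) (Fin k) ℂ,
        Xᴴ * B * X = -1 ∧ t = (Matrix.trace (D * (Xᴴ * A * X))).re}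
      (∑ i : Fin k, ω i * a ⟨p + (i : ℕ), by have := i.isLt; omega⟩) := by
  have hJ : Uᴴ * B * U = diagonal fun i => (inertiaSign p q z i : ℂ) :=
    hUB.trans (congrArg diagonal (funext fun i => (ofReal_inertiaSign i).symm))
  have hconj (W : Matrix (Fin (p + q + z)) (Fin k) ℂ) (C : Matrix _ _ ℂ) :
      (U * W * Qᴴ)ᴴ * C * (U * W * Qᴴ) = Q * (Wᴴ * (Uᴴ * C * U) * W) * Qᴴ := by
    simp only [conjTranspose_mul, conjTranspose_conjTranspose, Matrix.mul_assoc]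
  have hobj (M : Matrix (Fin k) (Fin k) ℂ) :
      (D * (Q * M * Qᴴ)).trace.re = ∑ l, ω l * (M l l).re :=
    re_trace_mul_mul_mul_conjTranspose hQD M
  set g := (Fin.castLEEmb hkq).trans (negIndex p z)
  refine ⟨⟨U * (1 : Matrix (Fin (p + q + z)) (Fin (p + q + z)) ℂ).submatrix id g * Qᴴ, ?_, ?_⟩, ?_⟩
  · rw [hconj, hJ, conjTranspose_submatrix_one_mul_diagonal_mul_submatrix_one,
      mul_mul_conjTranspose_eq_neg_one_iff hQ, ← diagonal_one, diagonal_neg]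
    exact congrArg diagonal (funext fun l => by simp [g])
  · rw [hconj, hUA, conjTranspose_submatrix_one_mul_diagonal_mul_submatrix_one, hobj]
    simp only [diagonal_apply_eq, Function.comp_apply, Complex.ofReal_re]
    rfl
  · rintro t ⟨X, hX, rfl⟩
    obtain ⟨W, rfl⟩ : ∃ W : Matrix (Fin (p + q + z)) (Fin k) ℂ, X = U * W * Qᴴ :=
      ⟨U⁻¹ * X * Q, by rw [Matrix.mul_assoc, Matrix.mul_assoc, mul_eq_one_comm.mp hQ,
        Matrix.mul_one, ← Matrix.mul_assoc, mul_nonsing_inv _ (U.isUnit_iff_isUnit_det.mp hU),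
        Matrix.one_mul]⟩
    rw [hconj, hJ, mul_mul_conjTranspose_eq_neg_one_iff hQ] at hX
    have hmono : Monotone (a ∘ negIndex p z) := fun s s' h =>
      hsort (negIndex p z s) (negIndex p z s') (Nat.le_add_right p s)
        (Fin.le_iff_val_le_val.2 (Nat.add_le_add_left h p)) (Nat.add_lt_add_left s'.isLt p)
    rw [hconj, hUA, hobj]
    refine (sum_mul_le_sum_mul_sum_norm_sq hkq W hX ha hmono hω hω0).trans_eq
      (sum_congr rfl fun l _ => ?_)
    exact congrArg _ (re_conjTranspose_mul_diagonal_mul_apply_self W a l).symm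
end

section
/- Let n = p + q + z with p ≥ 1, q ≥ 1, z ≥ 0, and let J = diag(I_p, −I_q, 0_z) ∈ ℂ^{n×n}. Let A, B ∈ ℂ^{n×n} be Hermitian and suppose there exists an invertible U ∈ ℂ^{n×n} with Uᴴ B U = J and Uᴴ A U = diag(a₁, …, aₙ) where all a_i ≥ 0, a₁ ≤ … ≤ a_p, and a_{p+1} ≤ … ≤ a_{p+q}. Let k₊ ≤ p, k₋ ≤ q, k = k₊ + k₋ ≥ 1, let J_k = diag(I_{k₊}, −I_{k₋}) ∈ ℂ^{k×k}, and let D = diag(D₊, D₋) ∈ ℂ^{k×k} be block diagonal with D₊ ∈ ℂ^{k₊×k₊} and D₋ ∈ ℂ^{k₋×k₋} both Hermitian positive semi-definite, with eigenvalues ω₁⁺ ≥ … ≥ ω_{k₊}⁺ ≥ 0 and ω₁⁻ ≥ … ≥ ω_{k₋}⁻ ≥ 0 respectively. Then the real number Σ_{i=1}^{k₊} ω_i⁺ a_i + Σ_{i=1}^{k₋} ω_i⁻ a_{p+i} is the minimum (a lower bound that is attained) of the set { t ∈ ℝ : ∃ X ∈ ℂ^{n×k}, Xᴴ B X = J_k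 and t = Re(trace(D Xᴴ A X)) }. -/
/-!
Substituting `X = U Y Qᴴ`, where `Q = diag(Q₊, Q₋)` diagonalises `D` and commutes with `J_k`,
turns the problem into minimising `∑ⱼ ωⱼ ∑ᵢ aᵢ |Yᵢⱼ|²` subject to `Yᴴ J Y = J_k`. The
constraint makes the block `Y₊₊` (rows `1..p`, first `k₊` columns) satisfy `Y₊₊ᴴ Y₊₊ ⪰ I`, and
likewise `Y₋₋ᴴ Y₋₋ ⪰ I`. For such a block, the first `s` columns carry mass at least `s - s'`
outside the first `s'` rows: in an eigenbasis of the Gram matrix of those rows, each of the at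
least `s - s'` kernel directions contributes `1`. Two Abel summations, using that `ω` decreases
and `a` increases on each block, turn these rectangle bounds into
`∑ⱼ ωⱼ aⱼ ≤ ∑ⱼ ωⱼ ∑ᵢ aᵢ |Yᵢⱼ|²`. Selecting the coordinate vectors `eⱼ` and `e_{p+j}` attains it.
-/

open Matrix Finset
open scoped ComplexOrder

theorem sum_range_mul_nonneg_of_antitoneOn {n : ℕ} {w g : ℕ → ℝ}
    (hw : AntitoneOn w (Set.Iio n)) (hw0 : ∀ j < n, 0 ≤ w j)
    (hg : ∀ s ≤ n, 0 ≤ ∑ j ∈ range s, g j) :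
    0 ≤ ∑ j ∈ range n, w j * g j := by
  rcases Nat.eq_zero_or_pos n with rfl | hn
  · simp
  have hparts := sum_range_by_parts w g n
  simp only [smul_eq_mul] at hparts
  rw [hparts, sub_eq_add_neg, ← sum_neg_distrib]
  refine add_nonneg (mul_nonneg (hw0 _ (by omega)) (hg n le_rfl)) (sum_nonneg fun i hi => ?_)
  rw [mem_range] at hi
  rw [← neg_mul]
  exact mul_nonneg (neg_nonneg.2 (sub_nonpos.2 (hw (Set.mem_Iio.2 (by omega))
    (Set.mem_Iio.2 (by omega)) (by omega)))) (hg _ (by omega))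

theorem sum_range_mul_nonneg_of_monotoneOn {n : ℕ} {b g : ℕ → ℝ}
    (hb : MonotoneOn b (Set.Iio n)) (hb0 : ∀ i < n, 0 ≤ b i)
    (hg : ∀ s ≤ n, 0 ≤ ∑ i ∈ Ico s n, g i) :
    0 ≤ ∑ i ∈ range n, b i * g i := by
  rcases Nat.eq_zero_or_pos n with rfl | hn
  · simp
  rw [← sum_range_reflect]
  refine sum_range_mul_nonneg_of_antitoneOn (w := fun j => b (n - 1 - j))
    (g := fun j => g (n - 1 - j)) ?_ (fun j hj => hb0 (n - 1 - j) (by omega)) fun s hs => ?_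
  · intro i hi j hj hij
    exact hb (Set.mem_Iio.2 (by simp at hj; omega)) (Set.mem_Iio.2 (by simp at hi; omega))
      (by omega)
  · rw [range_eq_Ico, sum_Ico_reflect g 0 (by omega), show n - 1 + 1 = n by omega]
    exact hg _ (by omega)

theorem sum_range_mul_sum_range_mul_nonneg {r m : ℕ} {w b : ℕ → ℝ} (G : ℕ → ℕ → ℝ)
    (hw : AntitoneOn w (Set.Iio r)) (hw0 : ∀ j < r, 0 ≤ w j)
    (hb : MonotoneOn b (Set.Iio m)) (hb0 : ∀ i < m, 0 ≤ b i)
    (hG : ∀ s ≤ r, ∀ s' ≤ m, 0 ≤ ∑ i ∈ Ico s' m, ∑ j ∈ range s, G i j) :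
    0 ≤ ∑ j ∈ range r, w j * ∑ i ∈ range m, b i * G i j := by
  refine sum_range_mul_nonneg_of_antitoneOn hw hw0 fun s hs => ?_
  rw [sum_comm]
  simp_rw [← mul_sum]
  exact sum_range_mul_nonneg_of_monotoneOn hb hb0 fun s' hs' => hG s hs s' hs'

theorem sum_Ico_sum_range_ite_eq {s s' m : ℕ} (hsm : s ≤ m) :
    ∑ i ∈ Ico s' m, ∑ j ∈ range s, (if i = j then (1 : ℝ) else 0) = (s - s' : ℕ) := by
  have : (Ico s' m).filter (· ∈ range s) = Ico s' s := by
    ext i; simp only [mem_filter, mem_Ico, mem_range]; omega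
  simp_rw [sum_ite_eq, sum_boole, this, Nat.card_Ico]

-- The truncated `s - s'` is the sum of the identity matrix over the rectangle `[s', m) × [0, s)`.
theorem sum_range_mul_le_sum_range_mul_sum {r m : ℕ} (hrm : r ≤ m) {w b : ℕ → ℝ}
    (F : ℕ → ℕ → ℝ) (hw : AntitoneOn w (Set.Iio r)) (hw0 : ∀ j < r, 0 ≤ w j)
    (hb : MonotoneOn b (Set.Iio m)) (hb0 : ∀ i < m, 0 ≤ b i)
    (hF : ∀ s ≤ r, ∀ s' ≤ m, ((s - s' : ℕ) : ℝ) ≤ ∑ i ∈ Ico s' m, ∑ j ∈ range s, F i j) :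
    ∑ j ∈ range r, w j * b j ≤ ∑ j ∈ range r, w j * ∑ i ∈ range m, b i * F i j := by
  have key := sum_range_mul_sum_range_mul_nonneg (fun i j => F i j - if i = j then 1 else 0)
    hw hw0 hb hb0 fun s hs s' hs' => by
      simp only [sum_sub_distrib, sum_Ico_sum_range_ite_eq (hs.trans hrm)]
      exact sub_nonneg.2 (hF s hs s' hs')
  have hdiag : ∀ j ∈ range r, ∑ i ∈ range m, b i * (if i = j then 1 else 0) = b j := fun j hj => by
    rw [sum_congr rfl fun i _ => mul_boole _ _, sum_ite_eq',
      if_pos (mem_range.2 ((mem_range.1 hj).trans_le hrm))]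
  simp only [mul_sub, sum_sub_distrib, sub_nonneg] at key
  rwa [sum_congr rfl fun j hj => by rw [hdiag j hj]] at key

theorem sum_fin_filter_eq_sum_range_filter {M : Type*} [AddCommMonoid M] {n : ℕ} (p : ℕ → Prop)
    [DecidablePred p] (f : ℕ → M) :
    ∑ i ∈ univ.filter (fun i : Fin n => p i), f i = ∑ i ∈ range n with p i, f i := by
  rw [sum_filter, sum_filter, Fin.sum_univ_eq_sum_range (fun i => if p i then f i else 0)]

theorem re_trace_conjTranspose_mul_self {ι κ : Type*} [Fintype ι] [Fintype κ]
    (u : Matrix ι κ ℂ) : (uᴴ * u).trace.re = ∑ i, ∑ j, Complex.normSq (u i j) := by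
  simp only [trace, Matrix.diag, mul_apply, conjTranspose_apply, Complex.re_sum, Complex.star_def,
    mul_comm (starRingEnd ℂ _), Complex.mul_conj, Complex.ofReal_re]
  exact sum_comm

theorem card_sub_rank_le_re_trace {ι : Type*} [Fintype ι] [DecidableEq ι] {S N : Matrix ι ι ℂ}
    (hS : S.PosSemidef) (hN : N.IsHermitian) (hSN : (S + N - 1).PosSemidef) :
    ((Fintype.card ι - N.rank : ℕ) : ℝ) ≤ S.trace.re := by
  set E : Matrix ι ι ℂ := (hN.eigenvectorUnitary : Matrix ι ι ℂ)
  have hEE : Eᴴ * E = 1 := Unitary.coe_star_mul_self _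
  have hN' : Eᴴ * N * E = diagonal fun i => (hN.eigenvalues i : ℂ) := by
    simpa [E, star_eq_conjTranspose, Function.comp_def] using
      hN.conjStarAlgAut_star_eigenvectorUnitary
  have htrace : S.trace = (Eᴴ * S * E).trace := by
    rw [trace_mul_comm, ← Matrix.mul_assoc, mul_eq_one_comm.mp hEE, Matrix.one_mul]
  -- In the eigenbasis of `N`, a diagonal entry of `S` sitting on a zero eigenvalue is `≥ 1`.
  have hentry : ∀ i, (if hN.eigenvalues i = 0 then (1 : ℝ) else 0) ≤ ((Eᴴ * S * E) i i).re := by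
    intro i
    have h0 := (Complex.nonneg_iff.1 ((hS.conjTranspose_mul_mul_same E).diag_nonneg (i := i))).1
    have h1 := (Complex.nonneg_iff.1 ((hSN.conjTranspose_mul_mul_same E).diag_nonneg (i := i))).1
    simp only [Matrix.mul_sub, Matrix.sub_mul, Matrix.mul_add, Matrix.add_mul, Matrix.mul_one,
      hEE, hN', Matrix.sub_apply, Matrix.add_apply, diagonal_apply_eq, one_apply_eq,
      Complex.sub_re, Complex.add_re, Complex.ofReal_re, Complex.one_re] at h1
    split_ifs with h <;> [linarith; exact h0]
  rw [htrace, trace, Complex.re_sum]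
  calc ((Fintype.card ι - N.rank : ℕ) : ℝ)
      = ∑ i, if hN.eigenvalues i = 0 then (1 : ℝ) else 0 := by
        rw [sum_boole, ← Fintype.card_subtype, hN.rank_eq_card_non_zero_eigs,
          ← Fintype.card_subtype_compl]
        simp only [not_not]
    _ ≤ _ := sum_le_sum fun i _ => hentry i

theorem card_sub_card_compl_le_sum_sum_normSq {ι κ : Type*} [Fintype ι] [DecidableEq ι]
    [Fintype κ] [DecidableEq κ] {u : Matrix ι κ ℂ} (hu : (uᴴ * u - 1).PosSemidef)
    (R : Finset ι) (T : Finset κ) :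
    ((#T - #Rᶜ : ℕ) : ℝ) ≤ ∑ i ∈ R, ∑ j ∈ T, Complex.normSq (u i j) := by
  set uR := u.submatrix (fun i : R => i.1) (fun j : T => j.1)
  set uC := u.submatrix (fun i : {i // i ∉ R} => i.1) (fun j : T => j.1)
  have hsplit : uRᴴ * uR + uCᴴ * uC - 1 = (uᴴ * u - 1).submatrix (↑) (↑) := by
    ext j j'
    simp only [uR, uC, Matrix.add_apply, Matrix.sub_apply, mul_apply, conjTranspose_apply,
      submatrix_apply, one_apply, Subtype.ext_iff]
    congr 1
    convert Fintype.sum_subtype_add_sum_subtype (· ∈ R) fun i => star (u i j) * u i j'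
  have hrank : uC.rank ≤ #Rᶜ := by
    simpa [card_compl] using uC.rank_le_card_height
  have key := card_sub_rank_le_re_trace (posSemidef_conjTranspose_mul_self uR)
    (isHermitian_conjTranspose_mul_self uC) (hsplit ▸ hu.submatrix _)
  have hsum : ∑ i, ∑ j, Complex.normSq (uR i j) = ∑ i ∈ R, ∑ j ∈ T, Complex.normSq (u i j) := by
    rw [← sum_coe_sort R]
    simp_rw [← sum_coe_sort T]
    rfl
  rw [rank_conjTranspose_mul_self, re_trace_conjTranspose_mul_self, hsum, Fintype.card_coe] at key
  exact le_trans (by gcongr) key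

theorem natCast_sub_le_sum_Ico_sum_range_normSq {m r : ℕ} {u : Matrix (Fin m) (Fin r) ℂ}
    (hu : (uᴴ * u - 1).PosSemidef) {s s' : ℕ} (hs : s ≤ r) (hs' : s' ≤ m) :
    ((s - s' : ℕ) : ℝ) ≤ ∑ i ∈ Ico s' m, ∑ j ∈ range s,
      if h : i < m ∧ j < r then Complex.normSq (u ⟨i, h.1⟩ ⟨j, h.2⟩) else 0 := by
  have key := card_sub_card_compl_le_sum_sum_normSq hu
    (univ.filter fun i : Fin m => s' ≤ (i : ℕ)) (univ.filter fun j : Fin r => (j : ℕ) < s)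
  have hT : #{j : Fin r | (j : ℕ) < s} = s := by rw [Fin.card_filter_val_lt]; omega
  have hR : #(univ.filter fun i : Fin m => s' ≤ (i : ℕ))ᶜ = s' := by
    rw [compl_filter]; simp only [not_le]; rw [Fin.card_filter_val_lt]; omega
  have hIco : (range m).filter (s' ≤ ·) = Ico s' m := by ext; simp; omega
  have hrange : (range r).filter (· < s) = range s := by ext; simp; omega
  rw [hT, hR] at key
  rw [← hIco, ← hrange, ← sum_fin_filter_eq_sum_range_filter]
  simp_rw [← sum_fin_filter_eq_sum_range_filter (fun j => j < s)]
  simpa using key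

theorem sum_mul_castLE_le_sum_mul_sum_mul_normSq {m r : ℕ} (hrm : r ≤ m) {b : Fin m → ℝ}
    (hb : Monotone b) (hb0 : ∀ i, 0 ≤ b i) {w : Fin r → ℝ} (hw : Antitone w)
    (hw0 : ∀ j, 0 ≤ w j) {u : Matrix (Fin m) (Fin r) ℂ} (hu : (uᴴ * u - 1).PosSemidef) :
    ∑ j, w j * b (Fin.castLE hrm j) ≤ ∑ j, w j * ∑ i, b i * Complex.normSq (u i j) := by
  set b' : ℕ → ℝ := fun i => if h : i < m then b ⟨i, h⟩ else 0
  set w' : ℕ → ℝ := fun j => if h : j < r then w ⟨j, h⟩ else 0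
  have key := sum_range_mul_le_sum_range_mul_sum hrm (w := w') (b := b') _
    (fun i (hi : i < r) j (hj : j < r) hij => by
      simp only [w', dif_pos hi, dif_pos hj]; exact hw (Fin.mk_le_mk.2 hij))
    (fun j hj => by simp only [w', dif_pos hj]; exact hw0 _)
    (fun i (hi : i < m) j (hj : j < m) hij => by
      simp only [b', dif_pos hi, dif_pos hj]; exact hb (Fin.mk_le_mk.2 hij))
    (fun i hi => by simp only [b', dif_pos hi]; exact hb0 _)
    fun s hs s' hs' => natCast_sub_le_sum_Ico_sum_range_normSq hu hs hs'
  convert key using 1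
  · rw [← Fin.sum_univ_eq_sum_range (fun j => w' j * b' j)]
    refine sum_congr rfl fun j _ => ?_
    simp [w', b', Fin.castLE, j.isLt.trans_le hrm]
  · rw [← Fin.sum_univ_eq_sum_range]
    refine sum_congr rfl fun j _ => ?_
    rw [← Fin.sum_univ_eq_sum_range]
    simp [w', b']

theorem sum_mul_le_sum_mul_sum_mul_normSq_of_submatrix {ι κ : Type*} [Fintype ι] {m r : ℕ}
    (hrm : r ≤ m) {a : ι → ℝ} (ha : ∀ i, 0 ≤ a i) {ρ : Fin m → ι} (hρ : Function.Injective ρ)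
    (hρa : Monotone (a ∘ ρ)) {w : Fin r → ℝ} (hw : Antitone w) (hw0 : ∀ j, 0 ≤ w j)
    {Y : Matrix ι κ ℂ} {γ : Fin r → κ}
    (hY : ((Y.submatrix ρ γ)ᴴ * Y.submatrix ρ γ - 1).PosSemidef) :
    ∑ j, w j * a (ρ (Fin.castLE hrm j)) ≤ ∑ j, w j * ∑ i, a i * Complex.normSq (Y i (γ j)) := by
  refine (sum_mul_castLE_le_sum_mul_sum_mul_normSq hrm hρa (fun i => ha _) hw hw0 hY).trans ?_
  gcongr with j
  · exact hw0 j
  exact (sum_map univ ⟨ρ, hρ⟩ fun i => a i * Complex.normSq (Y i (γ j))).symm.trans_le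
    (sum_le_univ_sum_of_nonneg fun i => mul_nonneg (ha i) (Complex.normSq_nonneg _))

theorem re_trace_diagonal_mul_conjTranspose_mul_diagonal_mul {ι κ : Type*} [Fintype ι]
    [Fintype κ] [DecidableEq ι] [DecidableEq κ] (w : κ → ℝ) (b : ι → ℝ) (Y : Matrix ι κ ℂ) :
    (trace (diagonal (fun j => (w j : ℂ)) * (Yᴴ * diagonal (fun i => (b i : ℂ)) * Y))).re =
      ∑ j, w j * ∑ i, b i * Complex.normSq (Y i j) := by
  simp only [trace, Matrix.diag, diagonal_mul, mul_apply (M := _ * _), mul_diagonal,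
    conjTranspose_apply, Complex.re_sum, mul_sum]
  refine sum_congr rfl fun j _ => sum_congr rfl fun i _ => ?_
  rw [Complex.star_def, mul_right_comm _ _ (Y i j), mul_comm (starRingEnd ℂ _), Complex.mul_conj]
  norm_cast
  ring

theorem conjTranspose_one_submatrix_mul_mul {n l : Type*} [Fintype n] [DecidableEq n]
    (M : Matrix n n ℂ) {σ : l → n} :
    ((1 : Matrix n n ℂ).submatrix id σ)ᴴ * M * (1 : Matrix n n ℂ).submatrix id σ =
      M.submatrix σ σ := by
  ext j j'
  simp [mul_apply, one_apply]

theorem conjTranspose_mul_mul_conjTranspose {R m n : Type*} [CommSemiring R] [StarRing R]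
    [Fintype m] [Fintype n] (U : Matrix m m R) (Y : Matrix m n R) (Q : Matrix n n R)
    (M : Matrix m m R) :
    (U * Y * Qᴴ)ᴴ * M * (U * Y * Qᴴ) = Q * (Yᴴ * (Uᴴ * M * U) * Y) * Qᴴ := by
  simp only [conjTranspose_mul, conjTranspose_conjTranspose, Matrix.mul_assoc]

theorem trace_mul_mul_mul_conjTranspose {R n : Type*} [CommSemiring R] [StarRing R] [Fintype n]
    (D Q M : Matrix n n R) : trace (D * (Q * M * Qᴴ)) = trace (Qᴴ * D * Q * M) := by
  rw [← Matrix.mul_assoc, ← Matrix.mul_assoc, trace_mul_comm]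
  simp only [Matrix.mul_assoc]

theorem mul_mul_conjTranspose_eq_iff {R n : Type*} [CommRing R] [StarRing R] [Fintype n]
    [DecidableEq n] {Q M N : Matrix n n R} (hQ : Qᴴ * Q = 1) :
    Q * M * Qᴴ = N ↔ M = Qᴴ * N * Q := by
  have hQ' : Q * Qᴴ = 1 := mul_eq_one_comm.mp hQ
  constructor <;> rintro rfl
  · simp only [Matrix.mul_assoc, hQ, Matrix.mul_one]
    rw [← Matrix.mul_assoc, hQ, Matrix.one_mul]
  · simp only [Matrix.mul_assoc, hQ', Matrix.mul_one]
    rw [← Matrix.mul_assoc, hQ', Matrix.one_mul]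

theorem surjective_mul_mul_conjTranspose {R m n : Type*} [CommRing R] [StarRing R] [Fintype m]
    [DecidableEq m] [Fintype n] [DecidableEq n] (u : (Matrix m m R)ˣ) {Q : Matrix n n R}
    (hQ : Qᴴ * Q = 1) :
    Function.Surjective fun Y : Matrix m n R => u.val * Y * Qᴴ := fun X =>
  ⟨u.inv * X * Q, by
    simp only [← Matrix.mul_assoc, u.val_inv, Matrix.one_mul]
    rw [Matrix.mul_assoc, mul_eq_one_comm.mp hQ, Matrix.mul_one]⟩

theorem reindex_fromBlocks_conjTranspose_mul_mul {R l m n : Type*} [CommSemiring R] [StarRing R]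
    [Fintype l] [Fintype m] [Fintype n] (e : l ⊕ m ≃ n) (A C : Matrix l l R)
    (B D : Matrix m m R) :
    (reindex e e (fromBlocks A 0 0 B))ᴴ * reindex e e (fromBlocks C 0 0 D) *
        reindex e e (fromBlocks A 0 0 B) =
      reindex e e (fromBlocks (Aᴴ * C * A) 0 0 (Bᴴ * D * B)) := by
  simp [reindex_apply, conjTranspose_submatrix, fromBlocks_conjTranspose, fromBlocks_multiply]

theorem reindex_fromBlocks_diagonal {R : Type*} [Zero R] {m n : ℕ} (d₁ : Fin m → R)
    (d₂ : Fin n → R) :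
    reindex finSumFinEquiv finSumFinEquiv (fromBlocks (diagonal d₁) 0 0 (diagonal d₂)) =
      diagonal (Fin.append d₁ d₂) := by
  rw [fromBlocks_diagonal, reindex_apply, submatrix_diagonal_equiv]
  congr 1
  ext j
  refine Fin.addCases (fun i => ?_) (fun i => ?_) j <;> simp

-- The paper's `J = diag(I_p, -I_q, 0_z)` and `J_k = diag(I_{k₊}, -I_{k₋})`.
def signatureMatrix (p q z : ℕ) : Matrix (Fin (p + q + z)) (Fin (p + q + z)) ℂ :=
  diagonal fun i => if (i : ℕ) < p then 1 else if (i : ℕ) < p + q then -1 else 0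

def signatureMatrix₂ (kp km : ℕ) : Matrix (Fin (kp + km)) (Fin (kp + km)) ℂ :=
  diagonal fun i => if (i : ℕ) < kp then 1 else -1

theorem conjTranspose_mul_signatureMatrix_mul_submatrix {p q z : ℕ} {κ κ' : Type*} [Fintype κ]
    (Y : Matrix (Fin (p + q + z)) κ ℂ) (γ : κ' → κ) :
    (Yᴴ * signatureMatrix p q z * Y).submatrix γ γ =
      (Y.submatrix (fun i => Fin.castAdd z (Fin.castAdd q i)) γ)ᴴ *
          Y.submatrix (fun i => Fin.castAdd z (Fin.castAdd q i)) γ -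
        (Y.submatrix (fun i => Fin.castAdd z (Fin.natAdd p i)) γ)ᴴ *
          Y.submatrix (fun i => Fin.castAdd z (Fin.natAdd p i)) γ := by
  ext c c'
  simp only [submatrix_apply, Matrix.sub_apply, mul_apply (M := _ * _), signatureMatrix,
    mul_diagonal]
  simp [mul_apply, Fin.sum_univ_add, sub_eq_add_neg, add_assoc]

theorem signatureMatrix₂_submatrix_castAdd (kp km : ℕ) :
    (signatureMatrix₂ kp km).submatrix (Fin.castAdd km) (Fin.castAdd km) = 1 := by
  ext i j
  simp [signatureMatrix₂, one_apply, diagonal_apply]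

theorem signatureMatrix₂_submatrix_natAdd (kp km : ℕ) :
    (signatureMatrix₂ kp km).submatrix (Fin.natAdd kp) (Fin.natAdd kp) = -1 := by
  ext i j
  simp [signatureMatrix₂, one_apply, diagonal_apply, apply_ite]

theorem signatureMatrix₂_eq_reindex_fromBlocks (kp km : ℕ) :
    signatureMatrix₂ kp km = reindex finSumFinEquiv finSumFinEquiv (fromBlocks 1 0 0 (-1)) := by
  ext i j
  refine Fin.addCases (fun i => ?_) (fun i => ?_) i <;>
    refine Fin.addCases (fun j => ?_) (fun j => ?_) j <;>
    simp [signatureMatrix₂, one_apply, diagonal_apply, apply_ite, Fin.ext_iff] <;> omega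

section BlockUnitary

variable {kp km : ℕ} {Qp : Matrix (Fin kp) (Fin kp) ℂ} {Qm : Matrix (Fin km) (Fin km) ℂ}

theorem reindex_fromBlocks_conjTranspose_mul_self (hQp : Qpᴴ * Qp = 1) (hQm : Qmᴴ * Qm = 1) :
    (reindex finSumFinEquiv finSumFinEquiv (fromBlocks Qp 0 0 Qm))ᴴ *
      reindex finSumFinEquiv finSumFinEquiv (fromBlocks Qp 0 0 Qm) = 1 := by
  have h := reindex_fromBlocks_conjTranspose_mul_mul finSumFinEquiv Qp 1 Qm 1
  rwa [Matrix.mul_one, Matrix.mul_one, hQp, hQm, fromBlocks_one,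
    show reindex finSumFinEquiv finSumFinEquiv (1 : Matrix (Fin kp ⊕ Fin km) _ ℂ) = 1 from
      submatrix_one_equiv _, Matrix.mul_one] at h

theorem reindex_fromBlocks_conjTranspose_mul_signatureMatrix₂_mul (hQp : Qpᴴ * Qp = 1)
    (hQm : Qmᴴ * Qm = 1) :
    (reindex finSumFinEquiv finSumFinEquiv (fromBlocks Qp 0 0 Qm))ᴴ * signatureMatrix₂ kp km *
      reindex finSumFinEquiv finSumFinEquiv (fromBlocks Qp 0 0 Qm) = signatureMatrix₂ kp km := by
  rw [signatureMatrix₂_eq_reindex_fromBlocks, reindex_fromBlocks_conjTranspose_mul_mul]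
  simp [hQp, hQm]

theorem reindex_fromBlocks_conjTranspose_mul_mul_eq_diagonal {Dp : Matrix (Fin kp) (Fin kp) ℂ}
    {Dm : Matrix (Fin km) (Fin km) ℂ} {ωp : Fin kp → ℝ} {ωm : Fin km → ℝ}
    (hQDp : Qpᴴ * Dp * Qp = diagonal fun i => (ωp i : ℂ))
    (hQDm : Qmᴴ * Dm * Qm = diagonal fun i => (ωm i : ℂ)) :
    (reindex finSumFinEquiv finSumFinEquiv (fromBlocks Qp 0 0 Qm))ᴴ *
        reindex finSumFinEquiv finSumFinEquiv (fromBlocks Dp 0 0 Dm) *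
        reindex finSumFinEquiv finSumFinEquiv (fromBlocks Qp 0 0 Qm) =
      diagonal fun j => ((Fin.append ωp ωm j : ℝ) : ℂ) := by
  rw [reindex_fromBlocks_conjTranspose_mul_mul, hQDp, hQDm, reindex_fromBlocks_diagonal]
  congr 1
  ext j
  refine Fin.addCases (fun i => ?_) (fun i => ?_) j <;> simp

end BlockUnitary

section Reduced

variable {p q z kp km : ℕ} (hkp : kp ≤ p) (hkm : km ≤ q) {a : Fin (p + q + z) → ℝ}
  {ωp : Fin kp → ℝ} {ωm : Fin km → ℝ}

theorem sum_mul_add_sum_mul_le_of_conjTranspose_mul_signatureMatrix_mul_eq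
    (ha : ∀ i, 0 ≤ a i) (hap : Monotone fun i : Fin p => a (Fin.castAdd z (Fin.castAdd q i)))
    (ham : Monotone fun i : Fin q => a (Fin.castAdd z (Fin.natAdd p i)))
    (hωp : Antitone ωp) (hωp0 : ∀ i, 0 ≤ ωp i) (hωm : Antitone ωm) (hωm0 : ∀ i, 0 ≤ ωm i)
    {Y : Matrix (Fin (p + q + z)) (Fin (kp + km)) ℂ}
    (hY : Yᴴ * signatureMatrix p q z * Y = signatureMatrix₂ kp km) :
    ∑ i, ωp i * a (Fin.castAdd z (Fin.castAdd q (Fin.castLE hkp i))) +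
        ∑ i, ωm i * a (Fin.castAdd z (Fin.natAdd p (Fin.castLE hkm i))) ≤
      ∑ j, Fin.append ωp ωm j * ∑ i, a i * Complex.normSq (Y i j) := by
  have hpos := conjTranspose_mul_signatureMatrix_mul_submatrix Y (Fin.castAdd km)
  have hneg := conjTranspose_mul_signatureMatrix_mul_submatrix Y (Fin.natAdd kp)
  rw [hY, signatureMatrix₂_submatrix_castAdd, eq_sub_iff_add_eq, add_comm,
    ← eq_sub_iff_add_eq] at hpos
  rw [hY, signatureMatrix₂_submatrix_natAdd, eq_sub_iff_add_eq, neg_add_eq_sub] at hneg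
  rw [Fin.sum_univ_add]
  simp only [Fin.append_left, Fin.append_right]
  refine add_le_add (sum_mul_le_sum_mul_sum_mul_normSq_of_submatrix hkp ha ?_ hap hωp hωp0 ?_)
    (sum_mul_le_sum_mul_sum_mul_normSq_of_submatrix hkm ha ?_ ham hωm hωm0 ?_)
  · exact (Fin.castAdd_injective _ _).comp (Fin.castAdd_injective _ _)
  · rw [← hpos]; exact posSemidef_conjTranspose_mul_self _
  · exact (Fin.castAdd_injective _ _).comp (Fin.natAdd_injective _ _)
  · rw [hneg]; exact posSemidef_conjTranspose_mul_self _

theorem exists_conjTranspose_mul_signatureMatrix_mul_eq_and_sum_mul_eq :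
    ∃ Y : Matrix (Fin (p + q + z)) (Fin (kp + km)) ℂ,
      Yᴴ * signatureMatrix p q z * Y = signatureMatrix₂ kp km ∧
      ∑ i, ωp i * a (Fin.castAdd z (Fin.castAdd q (Fin.castLE hkp i))) +
          ∑ i, ωm i * a (Fin.castAdd z (Fin.natAdd p (Fin.castLE hkm i))) =
        ∑ j, Fin.append ωp ωm j * ∑ i, a i * Complex.normSq (Y i j) := by
  set σ : Fin (kp + km) → Fin (p + q + z) :=
    Fin.append (fun i => Fin.castAdd z (Fin.castAdd q (Fin.castLE hkp i)))
      (fun i => Fin.castAdd z (Fin.natAdd p (Fin.castLE hkm i)))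
  have hσ : Function.Injective σ := by
    refine Fin.append_injective_iff.2 ⟨fun i j h => ?_, fun i j h => ?_, fun i j h => ?_⟩ <;>
      simp [Fin.ext_iff] at h ⊢ <;> omega
  refine ⟨(1 : Matrix _ _ ℂ).submatrix id σ, ?_, ?_⟩
  · rw [conjTranspose_one_submatrix_mul_mul, signatureMatrix, submatrix_diagonal _ _ hσ,
      signatureMatrix₂]
    congr 1
    ext j
    refine Fin.addCases (fun i => ?_) (fun i => ?_) j <;> simp [σ] <;> omega
  · have hcol : ∀ j, ∑ i, a i * Complex.normSq ((1 : Matrix _ _ ℂ).submatrix id σ i j) =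
        a (σ j) := by
      simp [one_apply, apply_ite]
    simp only [hcol, Fin.sum_univ_add, σ, Fin.append_left, Fin.append_right]

theorem isLeast_sum_mul_sum_mul_normSq (ha : ∀ i, 0 ≤ a i)
    (hap : Monotone fun i : Fin p => a (Fin.castAdd z (Fin.castAdd q i)))
    (ham : Monotone fun i : Fin q => a (Fin.castAdd z (Fin.natAdd p i)))
    (hωp : Antitone ωp) (hωp0 : ∀ i, 0 ≤ ωp i) (hωm : Antitone ωm) (hωm0 : ∀ i, 0 ≤ ωm i) :
    IsLeast {t | ∃ Y : Matrix (Fin (p + q + z)) (Fin (kp + km)) ℂ,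
        Yᴴ * signatureMatrix p q z * Y = signatureMatrix₂ kp km ∧
          t = ∑ j, Fin.append ωp ωm j * ∑ i, a i * Complex.normSq (Y i j)}
      (∑ i, ωp i * a (Fin.castAdd z (Fin.castAdd q (Fin.castLE hkp i))) +
        ∑ i, ωm i * a (Fin.castAdd z (Fin.natAdd p (Fin.castLE hkm i)))) := by
  refine ⟨?_, ?_⟩
  · obtain ⟨Y, hY, hval⟩ := exists_conjTranspose_mul_signatureMatrix_mul_eq_and_sum_mul_eq hkp hkm
      (a := a) (ωp := ωp) (ωm := ωm)
    exact ⟨Y, hY, hval⟩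
  · rintro t ⟨Y, hY, rfl⟩
    exact sum_mul_add_sum_mul_le_of_conjTranspose_mul_signatureMatrix_mul_eq hkp hkm ha hap ham
      hωp hωp0 hωm hωm0 hY

end Reduced

/-- The paper's Corollary 3.3 in the diagonalizable case: with
`Uᴴ B U = J = diag(I_p, -I_q, 0_z)`, `Uᴴ A U = diag(a₁,…,aₙ) ⪰ 0`,
`D = diag(D₊, D₋)` block diagonal conformally with `J_k = diag(I_{k₊}, -I_{k₋})`,
`D₊, D₋ ⪰ 0` with eigenvalues `ω₁⁺ ≥ … ≥ ω_{k₊}⁺ ≥ 0` and `ω₁⁻ ≥ … ≥ ω_{k₋}⁻ ≥ 0`,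
the quantity `∑ ω_i⁺ a_i + ∑ ω_i⁻ a_{p+i}` is the minimum of
`Re(trace (D Xᴴ A X))` over `Xᴴ B X = J_k`. -/
theorem trace_inf_indefinite_B_mixed_constraint
    (p q z kp km : ℕ)
    (hkp : kp ≤ p) (hkm : km ≤ q)
    (A B : Matrix (Fin (p + q + z)) (Fin (p + q + z)) ℂ)
    (U : Matrix (Fin (p + q + z)) (Fin (p + q + z)) ℂ) (hU : IsUnit U)
    (a : Fin (p + q + z) → ℝ) (ha : ∀ i, 0 ≤ a i)
    (hsortp : ∀ i j : Fin (p + q + z), i ≤ j → (j : ℕ) < p → a i ≤ a j)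
    (hsortm : ∀ i j : Fin (p + q + z), p ≤ (i : ℕ) → i ≤ j → (j : ℕ) < p + q → a i ≤ a j)
    (hUB : Uᴴ * B * U = Matrix.diagonal fun i : Fin (p + q + z) =>
      if (i : ℕ) < p then (1 : ℂ) else if (i : ℕ) < p + q then -1 else 0)
    (hUA : Uᴴ * A * U = Matrix.diagonal fun i => (a i : ℂ))
    (Dp : Matrix (Fin kp) (Fin kp) ℂ)
    (Dm : Matrix (Fin km) (Fin km) ℂ)
    (Qp : Matrix (Fin kp) (Fin kp) ℂ) (hQp : Qpᴴ * Qp = 1)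
    (ωp : Fin kp → ℝ) (hωp : Antitone ωp) (hωp0 : ∀ i, 0 ≤ ωp i)
    (hQDp : Qpᴴ * Dp * Qp = Matrix.diagonal fun i => (ωp i : ℂ))
    (Qm : Matrix (Fin km) (Fin km) ℂ) (hQm : Qmᴴ * Qm = 1)
    (ωm : Fin km → ℝ) (hωm : Antitone ωm) (hωm0 : ∀ i, 0 ≤ ωm i)
    (hQDm : Qmᴴ * Dm * Qm = Matrix.diagonal fun i => (ωm i : ℂ)) :
    IsLeast {t : ℝ | ∃ X : Matrix (Fin (p + q + z)) (Fin (kp + km)) ℂ,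
        Xᴴ * B * X =
          (Matrix.diagonal fun i : Fin (kp + km) =>
            if (i : ℕ) < kp then (1 : ℂ) else -1) ∧
        t = (Matrix.trace
          ((Matrix.reindex finSumFinEquiv finSumFinEquiv
              (Matrix.fromBlocks Dp 0 0 Dm)) * (Xᴴ * A * X))).re}
      ((∑ i : Fin kp, ωp i * a ⟨(i : ℕ), by have := i.isLt; omega⟩) +
       (∑ i : Fin km, ωm i * a ⟨p + (i : ℕ), by have := i.isLt; omega⟩)) := by
  obtain ⟨u, rfl⟩ := hU
  rw [← signatureMatrix₂.eq_1]
  change _ = signatureMatrix p q z at hUB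
  have hQ := reindex_fromBlocks_conjTranspose_mul_self hQp hQm
  convert isLeast_sum_mul_sum_mul_normSq hkp hkm ha (fun i j hij => hsortp _ _ hij j.isLt)
    (fun i j hij => hsortm _ _ (Nat.le_add_right p i) (Nat.add_le_add_left hij p)
      (Nat.add_lt_add_left j.isLt p)) hωp hωp0 hωm hωm0 using 1
  · ext t
    refine (surjective_mul_mul_conjTranspose u hQ).exists.trans
      (exists_congr fun Y => and_congr ?_ ?_)
    · rw [conjTranspose_mul_mul_conjTranspose, hUB, mul_mul_conjTranspose_eq_iff hQ,
        reindex_fromBlocks_conjTranspose_mul_signatureMatrix₂_mul hQp hQm]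
    · rw [conjTranspose_mul_mul_conjTranspose, hUA, trace_mul_mul_mul_conjTranspose,
        reindex_fromBlocks_conjTranspose_mul_mul_eq_diagonal hQDp hQDm,
        re_trace_diagonal_mul_conjTranspose_mul_diagonal_mul]
  · rfl
end

section
/- Let μ, δ ∈ ℝ satisfy 0 < δ < 1/μ < 1 < μ. Let A = diag(1, μ) ∈ ℂ^{2×2}, B = J₂ = diag(1, −1) ∈ ℂ^{2×2}. For σ ∈ (−1,1) let Q(σ) = [[√(1−σ²), −σ], [σ, √(1−σ²)]] and D(σ) = Q(σ)ᴴ · diag(1, δ) · Q(σ) (a positive definite Hermitian matrix). Then 1 + δμ < μ + δ, and there exist σ ∈ (−1,1) with σ ≠ 0 and X ∈ ℂ^{2×2} such that Xᴴ B X = J₂ and Re(trace(D(σ) Xᴴ A X)) < 1 + δμ. Consequently, for this choice of σ, the infimum of trace(D(σ) Xᴴ A X) over Xᴴ B X = J₂ is strictly less than min{1 + δμ, μ + δ}, so it cannot equal either of the two possible sums of pairwise products of the eigenvalues {1, δ} of D(σ) with the pencil eigenvalues {1, −μ} of A − λB. -/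
open Matrix BigOperators
open scoped ComplexOrder

/-- The matrix `A = diag(1, μ)` of the paper's example in section 3. -/
noncomputable def exampleA (μ : ℝ) : Matrix (Fin 2) (Fin 2) ℂ := !![1, 0; 0, (μ : ℂ)]

/-- The matrix `B = J₂ = diag(1, -1)` of the paper's example in section 3. -/
def exampleB : Matrix (Fin 2) (Fin 2) ℂ := !![1, 0; 0, -1]

/-- The rotation-like matrix `Q(σ)` of the paper's example in section 3. -/
noncomputable def exampleQ (σ : ℝ) : Matrix (Fin 2) (Fin 2) ℂ :=
  !![(Real.sqrt (1 - σ ^ 2) : ℂ), -(σ : ℂ); (σ : ℂ), (Real.sqrt (1 - σ ^ 2) : ℂ)]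

/-- The matrix `D(σ) = Q(σ)ᴴ diag(1, δ) Q(σ)` of the paper's example in section 3. -/
noncomputable def exampleD (δ σ : ℝ) : Matrix (Fin 2) (Fin 2) ℂ :=
  (exampleQ σ)ᴴ * !![1, 0; 0, (δ : ℂ)] * exampleQ σ

/-! At `σ = 0` the matrix `D` is diagonal and `X = I` gives the trace `1 + δμ`. Tilting `D` by a
small rotation `Q(σ)` and `X` by a hyperbolic rotation with `sinh = (1 - δ)/(1 + δ) · σ` changes the
trace by a quadratic form in `(σ, sinh)`, which is indefinite because `δμ < 1`, plus terms of
order `σ⁴`; along this direction the change is negative. The infimum is a genuine one, since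
`trace (D P) ≥ 0` for positive semidefinite `D` and `P`. -/

open scoped MatrixOrder in
theorem Matrix.PosSemidef.trace_mul_nonneg {𝕜 n : Type*} [RCLike 𝕜] [Fintype n]
    {D P : Matrix n n 𝕜} (hD : D.PosSemidef) (hP : P.PosSemidef) : 0 ≤ (D * P).trace := by
  classical
  obtain ⟨R, rfl⟩ := CStarAlgebra.nonneg_iff_eq_star_mul_self.mp hD.nonneg
  rw [star_eq_conjTranspose, mul_assoc, trace_mul_comm]
  exact (hP.mul_mul_conjTranspose_same R).trace_nonneg

noncomputable def hyperbolicRotation (ch sh : ℝ) : Matrix (Fin 2) (Fin 2) ℂ :=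
  !![(ch : ℂ), (sh : ℂ); (sh : ℂ), (ch : ℂ)]

theorem conjTranspose_hyperbolicRotation_mul_exampleB_mul {ch sh : ℝ}
    (h : ch ^ 2 = 1 + sh ^ 2) :
    (hyperbolicRotation ch sh)ᴴ * exampleB * hyperbolicRotation ch sh = exampleB := by
  have h' : (ch : ℂ) ^ 2 = 1 + (sh : ℂ) ^ 2 := by exact_mod_cast h
  ext i j
  fin_cases i <;> fin_cases j <;> simp [hyperbolicRotation, exampleB, mul_apply, Fin.sum_univ_two]
  · linear_combination h'
  · ring
  · ring
  · linear_combination -h'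

theorem det_exampleQ {σ : ℝ} (hσ : σ ^ 2 ≤ 1) : (exampleQ σ).det = 1 := by
  have hc : ((√(1 - σ ^ 2) : ℝ) : ℂ) ^ 2 = 1 - (σ : ℂ) ^ 2 := by
    exact_mod_cast Real.sq_sqrt (sub_nonneg.mpr hσ)
  rw [exampleQ, det_fin_two_of]
  linear_combination hc

theorem exampleD_posDef {δ σ : ℝ} (hδ : 0 < δ) (hσ : σ ^ 2 ≤ 1) : (exampleD δ σ).PosDef := by
  have hΛ : (!![1, 0; 0, (δ : ℂ)]).PosDef := by
    have := (posDef_diagonal_iff (d := ![(1 : ℂ), δ])).mpr (by simp [Fin.forall_fin_two, hδ])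
    rwa [diagonal_fin_two] at this
  have hQ : IsUnit (exampleQ σ) := by
    rw [isUnit_iff_isUnit_det, det_exampleQ hσ]
    exact isUnit_one
  exact hΛ.conjTranspose_mul_mul_same (mulVec_injective_of_isUnit hQ)

theorem exampleA_posSemidef {μ : ℝ} (hμ : 0 ≤ μ) : (exampleA μ).PosSemidef := by
  have := (posSemidef_diagonal_iff (d := ![(1 : ℂ), μ])).mpr (by simp [Fin.forall_fin_two, hμ])
  rwa [diagonal_fin_two] at this

/-- With `s = sin θ`, `t = sinh φ` and `κ = cos θ · cosh φ`, this is the change of the trace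
caused by the two tilts. -/
def traceDefect (μ δ s κ t : ℝ) : ℝ :=
  (1 + μ) * (1 + δ) * t ^ 2 + (1 - δ) * (μ - 1) * s ^ 2 - 2 * (1 - δ) * (1 + μ) * κ * s * t

theorem re_trace_exampleD_mul_conj_hyperbolicRotation {μ δ σ ch sh : ℝ} (hσ : σ ^ 2 ≤ 1)
    (h : ch ^ 2 = 1 + sh ^ 2) :
    (trace (exampleD δ σ * ((hyperbolicRotation ch sh)ᴴ * exampleA μ *
        hyperbolicRotation ch sh))).re =
      1 + δ * μ + traceDefect μ δ σ (√(1 - σ ^ 2) * ch) sh := by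
  have hc := Real.sq_sqrt (sub_nonneg.mpr hσ)
  have htr : trace (exampleD δ σ * ((hyperbolicRotation ch sh)ᴴ * exampleA μ *
        hyperbolicRotation ch sh)) =
      (((√(1 - σ ^ 2) ^ 2 + δ * σ ^ 2) * (ch ^ 2 + μ * sh ^ 2)
        - 2 * (1 - δ) * √(1 - σ ^ 2) * σ * (1 + μ) * ch * sh
        + (σ ^ 2 + δ * √(1 - σ ^ 2) ^ 2) * (sh ^ 2 + μ * ch ^ 2) : ℝ) : ℂ) := by
    simp [exampleD, exampleQ, exampleA, hyperbolicRotation, trace, mul_apply, Fin.sum_univ_two]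
    ring
  rw [htr, Complex.ofReal_re, traceDefect]
  linear_combination ((ch ^ 2 + μ * sh ^ 2) + δ * (sh ^ 2 + μ * ch ^ 2)) * hc
    + ((1 + (δ - 1) * σ ^ 2) + μ * (δ + (1 - δ) * σ ^ 2)) * h

theorem one_sub_sq_le_sqrt_mul_sqrt {s t : ℝ} (hs : s ^ 2 ≤ 1) :
    1 - s ^ 2 ≤ √(1 - s ^ 2) * √(1 + t ^ 2) := by
  have h1 : 1 - s ^ 2 ≤ √(1 - s ^ 2) := Real.le_sqrt_self_iff.mpr (by nlinarith [sq_nonneg s])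
  have h2 : 1 ≤ √(1 + t ^ 2) := Real.one_le_sqrt.mpr (by nlinarith [sq_nonneg t])
  nlinarith [Real.sqrt_nonneg (1 - s ^ 2)]

theorem traceDefect_neg {μ δ s κ t : ℝ} (hδ : -1 < δ) (hδ1 : δ < 1) (hμ : -1 < μ) (hs : s ≠ 0)
    (ht : (1 + δ) * t = (1 - δ) * s) (hκ : 1 - s ^ 2 ≤ κ)
    (hsmall : (1 - δ) * (1 + μ) * s ^ 2 < 1 - δ * μ) :
    traceDefect μ δ s κ t < 0 := by
  have hfactor : (1 + δ) * traceDefect μ δ s κ t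
      = 2 * (1 - δ) * s ^ 2 * ((1 - δ) * (1 + μ) * (1 - κ) - (1 - δ * μ)) := by
    rw [traceDefect]
    linear_combination ((1 + μ) * ((1 + δ) * t + (1 - δ) * s) - 2 * (1 - δ) * (1 + μ) * κ * s) * ht
  have hbracket : (1 - δ) * (1 + μ) * (1 - κ) - (1 - δ * μ) < 0 := by
    nlinarith [mul_pos (sub_pos.mpr hδ1) (neg_lt_iff_pos_add'.mp hμ)]
  refine neg_of_mul_neg_right ?_ (by linarith : (0 : ℝ) ≤ 1 + δ)
  rw [hfactor]
  exact mul_neg_of_pos_of_neg (by have := sub_pos.mpr hδ1; positivity) hbracket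

theorem exists_feasible_re_trace_lt {μ δ : ℝ} (hδ : 0 < δ) (hδμ : δ * μ < 1) (hμ : 1 < μ) :
    ∃ σ ∈ Set.Ioo (0 : ℝ) 1, ∃ X : Matrix (Fin 2) (Fin 2) ℂ, Xᴴ * exampleB * X = exampleB ∧
      (trace (exampleD δ σ * (Xᴴ * exampleA μ * X))).re < 1 + δ * μ := by
  have hδ1 : δ < 1 := by nlinarith
  set σ := (1 - δ * μ) / (2 * (1 + μ))
  set sh := (1 - δ) / (1 + δ) * σ
  have hσ0 : 0 < σ := div_pos (by linarith) (by linarith)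
  have hσμ : 2 * (1 + μ) * σ = 1 - δ * μ := mul_div_cancel₀ _ (by linarith)
  have hσ1 : σ < 1 := by nlinarith
  have hσ2 : σ ^ 2 ≤ 1 := by nlinarith
  have hsmall : (1 - δ) * (1 + μ) * σ ^ 2 < 1 - δ * μ :=
    calc (1 - δ) * (1 + μ) * σ ^ 2 = (1 - δ) * σ / 2 * (1 - δ * μ) := by
          linear_combination (1 - δ) * σ / 2 * hσμ
      _ < 1 - δ * μ := mul_lt_of_lt_one_left (by linarith) (by nlinarith)
  have hch : √(1 + sh ^ 2) ^ 2 = 1 + sh ^ 2 := Real.sq_sqrt (by positivity)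
  refine ⟨σ, ⟨hσ0, hσ1⟩, hyperbolicRotation √(1 + sh ^ 2) sh,
    conjTranspose_hyperbolicRotation_mul_exampleB_mul hch, ?_⟩
  rw [re_trace_exampleD_mul_conj_hyperbolicRotation hσ2 hch]
  have ht : (1 + δ) * sh = (1 - δ) * σ := by
    simp only [sh]
    field_simp
  have hκ := one_sub_sq_le_sqrt_mul_sqrt (t := sh) hσ2
  linarith [traceDefect_neg (by linarith) hδ1 (by linarith) hσ0.ne' ht hκ hsmall]

theorem example_D_not_block_diagonal_general
    (μ δ : ℝ) (h1 : 0 < δ) (h2 : δ < 1 / μ) (h4 : 1 < μ) :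
    1 + δ * μ < μ + δ ∧
    ∃ σ : ℝ, σ ∈ Set.Ioo (-1 : ℝ) 1 ∧ σ ≠ 0 ∧
      (exampleD δ σ).PosDef ∧ (exampleD δ σ).IsHermitian ∧
      (∃ X : Matrix (Fin 2) (Fin 2) ℂ,
        Xᴴ * exampleB * X = exampleB ∧
        (Matrix.trace (exampleD δ σ * (Xᴴ * exampleA μ * X))).re < 1 + δ * μ) ∧
      sInf {t : ℝ | ∃ X : Matrix (Fin 2) (Fin 2) ℂ,
          Xᴴ * exampleB * X = exampleB ∧
          t = (Matrix.trace (exampleD δ σ * (Xᴴ * exampleA μ * X))).re}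
        < min (1 + δ * μ) (μ + δ) := by
  have hδμ : δ * μ < 1 := (lt_div_iff₀ (by linarith)).mp h2
  have hlt : 1 + δ * μ < μ + δ := by nlinarith
  obtain ⟨σ, ⟨hσ0, hσ1⟩, X, hX, htr⟩ := exists_feasible_re_trace_lt h1 hδμ h4
  have hD := exampleD_posDef h1 (by nlinarith : σ ^ 2 ≤ 1)
  refine ⟨hlt, σ, ⟨by linarith, hσ1⟩, hσ0.ne', hD, hD.isHermitian, ⟨X, hX, htr⟩, ?_⟩
  rw [min_eq_left hlt.le]
  refine (csInf_le ?_ ?_).trans_lt htr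
  · refine ⟨0, ?_⟩
    rintro _ ⟨Y, -, rfl⟩
    exact (Complex.nonneg_iff.mp (hD.posSemidef.trace_mul_nonneg
      ((exampleA_posSemidef (by linarith)).conjTranspose_mul_mul_same Y))).1
  · exact ⟨X, hX, rfl⟩

/-- The paper's example showing that in Corollary 3.3 the matrix `D` must be block
diagonal conformally with `J_k`: for `0 < δ < 1/μ < 1 < μ` there is `σ ≠ 0` and a
feasible `X` (with `Xᴴ B X = J₂`) making `Re(trace(D(σ) Xᴴ A X))` smaller than
`1 + δμ = min{1 + δμ, μ + δ}`, so the infimum is below both candidate sums of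
products of the eigenvalues `{1, δ}` of `D(σ)` with the pencil eigenvalues `{1, -μ}`. -/
theorem example_D_not_block_diagonal
    (μ δ : ℝ) (h1 : 0 < δ) (h2 : δ < 1 / μ) (h3 : 1 / μ < 1) (h4 : 1 < μ) :
    1 + δ * μ < μ + δ ∧
    ∃ σ : ℝ, σ ∈ Set.Ioo (-1 : ℝ) 1 ∧ σ ≠ 0 ∧
      (exampleD δ σ).PosDef ∧ (exampleD δ σ).IsHermitian ∧
      (∃ X : Matrix (Fin 2) (Fin 2) ℂ,
        Xᴴ * exampleB * X = exampleB ∧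
        (Matrix.trace (exampleD δ σ * (Xᴴ * exampleA μ * X))).re < 1 + δ * μ) ∧
      sInf {t : ℝ | ∃ X : Matrix (Fin 2) (Fin 2) ℂ,
          Xᴴ * exampleB * X = exampleB ∧
          t = (Matrix.trace (exampleD δ σ * (Xᴴ * exampleA μ * X))).re}
        < min (1 + δ * μ) (μ + δ) :=
  example_D_not_block_diagonal_general μ δ h1 h2 h4
end

section
/- Let m ≥ 1 and let γ, α, β : {1,…,m} → ℝ with γ₁ > γ₂ > … > γ_m (all γ_i distinct and decreasing) and β₁ ≥ β₂ ≥ … ≥ β_m. Assume {β_i} majorizes {α_i}, i.e., for every subset S ⊆ {1,…,m}, Σ_{i∈S} α_i ≤ Σ_{i=1}^{|S|} β_i, and Σ_{i=1}^{m} α_i = Σ_{i=1}^{m} β_i. Then: (i) if Σ_{i=1}^{m} γ_i α_i = Σ_{i=1}^{m} γ_i β_i, then α_i = β_i for all i; (ii) if Σ_{i=1}^{m} γ_i α_i = Σ_{i=1}^{m} γ_i β_{m+1−i}, then α_i = β_{m+1−i} for all i. -/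
open BigOperators
open Finset


-- sum over filter (val < k) equals sum over range k of extended function
lemma filt_sum (m k : ℕ) (hk : k ≤ m) (f : Fin m → ℝ) :
    ∑ i ∈ Finset.univ.filter (fun i : Fin m => (i : ℕ) < k), f i
      = ∑ i ∈ Finset.range k, (if h : i < m then f ⟨i, h⟩ else 0) := by
  rcases Nat.eq_zero_or_pos k with h0 | h0
  · subst h0; simp
  have hm : 0 < m := lt_of_lt_of_le h0 hk
  refine Finset.sum_nbij' (fun i => (i : ℕ)) (fun j => ⟨j % m, Nat.mod_lt _ hm⟩) ?_ ?_ ?_ ?_ ?_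
  · intro a ha
    simp only [mem_filter, mem_univ, true_and] at ha
    simpa using ha
  · intro a ha
    simp only [mem_range] at ha
    simp only [mem_filter, mem_univ, true_and]
    have : a % m = a := Nat.mod_eq_of_lt (lt_of_lt_of_le ha hk)
    simp [this, ha]
  · intro a ha
    simp only [mem_filter, mem_univ, true_and] at ha
    ext
    simp [Nat.mod_eq_of_lt a.isLt]
  · intro a ha
    simp only [mem_range] at ha
    simp [Nat.mod_eq_of_lt (lt_of_lt_of_le ha hk)]
  · intro a ha
    simp only [mem_filter, mem_univ, true_and] at ha
    rw [dif_pos a.isLt]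

lemma card_filt (m k : ℕ) (hk : k ≤ m) :
    (Finset.univ.filter (fun i : Fin m => (i : ℕ) < k)).card = k := by
  have := filt_sum m k hk (fun _ => (1:ℝ))
  simp only [Finset.sum_const, nsmul_eq_mul, mul_one] at this
  have h2 : ∑ i ∈ Finset.range k, (if h : i < m then (1:ℝ) else 0) = k := by
    rw [Finset.sum_congr rfl (fun i hi => dif_pos (lt_of_lt_of_le (mem_range.mp hi) hk))]
    simp
  rw [h2] at this
  exact_mod_cast this

lemma key (m : ℕ) (γ a b : Fin m → ℝ) (hγ : StrictAnti γ)
    (hle : ∀ k : ℕ, k ≤ m →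
      ∑ i ∈ Finset.univ.filter (fun i : Fin m => (i : ℕ) < k), a i
        ≤ ∑ i ∈ Finset.univ.filter (fun i : Fin m => (i : ℕ) < k), b i)
    (hsum : ∑ i, a i = ∑ i, b i)
    (heq : ∑ i, γ i * a i = ∑ i, γ i * b i) :
    ∀ i, a i = b i := by
  set d : ℕ → ℝ := fun i => if h : i < m then b ⟨i, h⟩ - a ⟨i, h⟩ else 0 with hd
  set g : ℕ → ℝ := fun i => if h : i < m then γ ⟨i, h⟩ else 0 with hg
  set D : ℕ → ℝ := fun k => ∑ i ∈ Finset.range k, d i with hD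
  have hDnn : ∀ k, k ≤ m → 0 ≤ D k := by
    intro k hk
    have h1 := filt_sum m k hk (fun i => b i - a i)
    have : D k = (∑ i ∈ Finset.univ.filter (fun i : Fin m => (i : ℕ) < k), b i)
        - (∑ i ∈ Finset.univ.filter (fun i : Fin m => (i : ℕ) < k), a i) := by
      rw [← Finset.sum_sub_distrib, hD, h1]
    rw [this]
    linarith [hle k hk]
  have hfull : ∀ f : Fin m → ℝ,
      Finset.univ.filter (fun i : Fin m => (i : ℕ) < m) = Finset.univ := by
    intro f
    ext i; simp [i.isLt]
  have hDm : D m = 0 := by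
    have h1 := filt_sum m m le_rfl (fun i => b i - a i)
    rw [hfull (fun i => b i - a i)] at h1
    have : D m = ∑ i : Fin m, (b i - a i) := by
      rw [hD, h1]
    rw [this, Finset.sum_sub_distrib, hsum, sub_self]
  have habel : ∑ i ∈ Finset.range m, g i * d i
      = g (m - 1) * D m - ∑ i ∈ Finset.range (m - 1), (g (i + 1) - g i) * D (i + 1) := by
    simpa [smul_eq_mul] using Finset.sum_range_by_parts g d m
  have hzero : ∑ i ∈ Finset.range m, g i * d i = 0 := by
    have : ∑ i ∈ Finset.range m, g i * d i = ∑ i : Fin m, γ i * (b i - a i) := by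
      rw [← Fin.sum_univ_eq_sum_range (fun i => g i * d i) m]
      apply Finset.sum_congr rfl
      intro i _
      simp [hg, hd, i.isLt]
    rw [this]
    simp only [mul_sub]
    rw [Finset.sum_sub_distrib, heq, sub_self]
  have hsum0 : ∑ i ∈ Finset.range (m - 1), (g i - g (i + 1)) * D (i + 1) = 0 := by
    have : ∑ i ∈ Finset.range (m - 1), (g i - g (i + 1)) * D (i + 1)
        = -(∑ i ∈ Finset.range (m - 1), (g (i + 1) - g i) * D (i + 1)) := by
      rw [← Finset.sum_neg_distrib]
      apply Finset.sum_congr rfl; intro i _; ring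
    rw [this]
    rw [hzero, hDm] at habel
    linarith [habel]
  have hterm : ∀ i ∈ Finset.range (m - 1), (g i - g (i + 1)) * D (i + 1) = 0 := by
    apply (Finset.sum_eq_zero_iff_of_nonneg ?_).mp hsum0
    intro i hi
    have him : i + 1 < m := by have := mem_range.mp hi; omega
    have hpos : 0 < g i - g (i + 1) := by
      have : γ ⟨i, by omega⟩ > γ ⟨i + 1, him⟩ := hγ (by simp [Fin.lt_def])
      simp only [hg, dif_pos him, dif_pos (show i < m by omega)]
      linarith
    exact mul_nonneg hpos.le (hDnn (i + 1) (by omega))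
  have hDzero : ∀ k, k ≤ m → D k = 0 := by
    intro k hk
    rcases Nat.eq_zero_or_pos k with h0 | h0
    · simp [hD, h0]
    rcases eq_or_lt_of_le hk with h1 | h1
    · rw [h1, hDm]
    · have hk1 : k - 1 ∈ Finset.range (m - 1) := by simp; omega
      have := hterm (k - 1) hk1
      have him : k - 1 + 1 < m := by omega
      have hpos : 0 < g (k - 1) - g (k - 1 + 1) := by
        have : γ ⟨k - 1, by omega⟩ > γ ⟨k - 1 + 1, him⟩ := hγ (by simp [Fin.lt_def])
        simp only [hg, dif_pos him, dif_pos (show k - 1 < m by omega)]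
        linarith
      have hD0 : D (k - 1 + 1) = 0 := by
        rcases mul_eq_zero.mp this with h | h
        · exact absurd h (ne_of_gt hpos)
        · exact h
      have : k - 1 + 1 = k := by omega
      rwa [this] at hD0
  intro i
  have h1 : D (i + 1) - D i = d i := by
    simp [hD, Finset.sum_range_succ]
  rw [hDzero (i + 1) i.isLt, hDzero i (le_of_lt i.isLt)] at h1
  have : d (i : ℕ) = 0 := by linarith
  simp only [hd, dif_pos i.isLt, Fin.eta] at this
  linarith

lemma rev_sum (m k : ℕ) (hk : k ≤ m) (f : Fin m → ℝ) :
    ∑ i ∈ Finset.univ.filter (fun i : Fin m => (i : ℕ) < k),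
        f ⟨m - 1 - (i : ℕ), by have := i.isLt; omega⟩
      = ∑ i ∈ Finset.univ.filter (fun i : Fin m => ¬ (i : ℕ) < m - k), f i := by
  refine Finset.sum_nbij' (fun i : Fin m => (⟨m - 1 - (i : ℕ), by have := i.isLt; omega⟩ : Fin m))
    (fun j : Fin m => (⟨m - 1 - (j : ℕ), by have := j.isLt; omega⟩ : Fin m)) ?_ ?_ ?_ ?_ ?_
  · intro a ha
    simp only [mem_filter, mem_univ, true_and] at ha ⊢
    have := a.isLt; omega
  · intro a ha
    simp only [mem_filter, mem_univ, true_and] at ha ⊢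
    have := a.isLt; omega
  · intro a ha
    simp only [mem_filter, mem_univ, true_and] at ha
    ext; simp only []
    have := a.isLt; omega
  · intro a ha
    simp only [mem_filter, mem_univ, true_and] at ha
    ext; simp only []
    have := a.isLt; omega
  · intro a _; rfl



/-- Lemma 4.1 of the paper (equality part): if `γ` is strictly decreasing, `β` is in
descending order and `{β_i}` majorizes `{α_i}`, then equality in
`∑ γ_i α_i ≤ ∑ γ_i β^↓_i` forces `α = β^↓`, and equality in
`∑ γ_i β^↑_i ≤ ∑ γ_i α_i` forces `α = β^↑`. -/
theorem majorization_weighted_sum_equality_cases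
    (m : ℕ) (hm : 1 ≤ m) (γ α β : Fin m → ℝ)
    (hγ : StrictAnti γ) (hβ : Antitone β)
    (hmaj : ∀ S : Finset (Fin m),
      ∑ i ∈ S, α i ≤ ∑ i ∈ Finset.univ.filter (fun i : Fin m => (i : ℕ) < S.card), β i)
    (hsum : ∑ i, α i = ∑ i, β i) :
    ((∑ i : Fin m, γ i * α i) = (∑ i : Fin m, γ i * β i) →
      ∀ i, α i = β i) ∧
    ((∑ i : Fin m, γ i * α i) =
        (∑ i : Fin m, γ i * β ⟨m - 1 - (i : ℕ), by have := i.isLt; omega⟩) →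
      ∀ i : Fin m, α i = β ⟨m - 1 - (i : ℕ), by have := i.isLt; omega⟩) := by
  have hle1 : ∀ k : ℕ, k ≤ m →
      ∑ i ∈ Finset.univ.filter (fun i : Fin m => (i : ℕ) < k), α i
        ≤ ∑ i ∈ Finset.univ.filter (fun i : Fin m => (i : ℕ) < k), β i := by
    intro k hk
    have := hmaj (Finset.univ.filter (fun i : Fin m => (i : ℕ) < k))
    rwa [card_filt m k hk] at this
  have hsplit : ∀ (p : Fin m → Prop) [DecidablePred p] (f : Fin m → ℝ),
      ∑ i ∈ Finset.univ.filter p, f i + ∑ i ∈ Finset.univ.filter (fun i => ¬ p i), f i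
        = ∑ i, f i := fun p _ f => Finset.sum_filter_add_sum_filter_not _ _ _
  have hcard : ∀ k : ℕ, k ≤ m →
      (Finset.univ.filter (fun i : Fin m => ¬ (i : ℕ) < k)).card = m - k := by
    intro k hk
    have h1 := hsplit (fun i : Fin m => (i : ℕ) < k) (fun _ => (1 : ℝ))
    simp only [Finset.sum_const, nsmul_eq_mul, mul_one, Finset.card_univ,
      Fintype.card_fin] at h1
    rw [card_filt m k hk] at h1
    have : ((Finset.univ.filter (fun i : Fin m => ¬ (i : ℕ) < k)).card : ℝ)
        = (m : ℝ) - k := by linarith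
    have h2 : ((Finset.univ.filter (fun i : Fin m => ¬ (i : ℕ) < k)).card : ℝ)
        = ((m - k : ℕ) : ℝ) := by rw [Nat.cast_sub hk]; exact this
    exact_mod_cast h2
  constructor
  · intro h
    exact key m γ α β hγ hle1 hsum h
  · intro h i
    set b' : Fin m → ℝ := fun i : Fin m => β ⟨m - 1 - (i : ℕ), by have := i.isLt; omega⟩
      with hb'
    have hle2 : ∀ k : ℕ, k ≤ m →
        ∑ i ∈ Finset.univ.filter (fun i : Fin m => (i : ℕ) < k), b' i
          ≤ ∑ i ∈ Finset.univ.filter (fun i : Fin m => (i : ℕ) < k), α i := by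
      intro k hk
      have hrev := rev_sum m k hk β
      have hmk := hmaj (Finset.univ.filter (fun i : Fin m => ¬ (i : ℕ) < k))
      rw [hcard k hk] at hmk
      have h1 := hsplit (fun i : Fin m => (i : ℕ) < k) α
      have h2 := hsplit (fun i : Fin m => (i : ℕ) < m - k) β
      rw [hb']
      rw [hrev]
      linarith
    have hsum2 : ∑ i, b' i = ∑ i, α i := by
      have hrev := rev_sum m m le_rfl β
      have hfullb : Finset.univ.filter (fun i : Fin m => (i : ℕ) < m)
          = (Finset.univ : Finset (Fin m)) := by ext j; simp [j.isLt]
      have hfull0 : Finset.univ.filter (fun i : Fin m => ¬ (i : ℕ) < m - m)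
          = (Finset.univ : Finset (Fin m)) := by ext j; simp
      rw [hfullb, hfull0] at hrev
      rw [hb']
      rw [hrev, hsum]
    have heq2 : ∑ i, γ i * b' i = ∑ i, γ i * α i := h.symm
    exact (key m γ b' α hγ hle2 hsum2 heq2 i).symm
end

section
/- Let A ∈ ℂ^{n×n} be Hermitian. If the multiset of diagonal entries of A equals the multiset of eigenvalues of A (eigenvalues counted with multiplicity, regarded as complex numbers), then A is diagonal, i.e., A_{ij} = 0 for all i ≠ j. -/
open Matrix

/-! Let `D` be the diagonal part of `A`. Since `tr (A D) = tr (D A) = tr (D²) = ∑ aᵢᵢ²` and `A - D`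
is Hermitian, `tr ((A - D)ᴴ (A - D)) = tr (A²) - ∑ aᵢᵢ² = ∑ λᵢ² - ∑ aᵢᵢ²`, which vanishes when the
diagonal entries are the eigenvalues. As `tr (Bᴴ B)` is the sum of the squared moduli of the
entries of `B`, this forces `A = D`. -/

namespace Matrix

variable {n R 𝕜 : Type*} [Fintype n] [DecidableEq n]

theorem trace_sub_diagonal_diag_mul_self [CommRing R] (A : Matrix n n R) :
    ((A - diagonal A.diag) * (A - diagonal A.diag)).trace = (A * A).trace - ∑ i, A i i ^ 2 := by
  simp only [sub_mul, mul_sub, trace_sub, diagonal_mul_diagonal, trace_diagonal]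
  simp only [trace, diag_apply, mul_diagonal, diagonal_mul, sq]
  ring

variable [RCLike 𝕜]

theorem IsHermitian.trace_mul_self {A : Matrix n n 𝕜} (hA : A.IsHermitian) :
    (A * A).trace = ∑ i, (hA.eigenvalues i : 𝕜) ^ 2 := by
  conv_lhs => rw [hA.spectral_theorem, ← map_mul, Unitary.conjStarAlgAut_apply, trace_mul_cycle,
    Unitary.coe_star_mul_self, one_mul, diagonal_mul_diagonal, trace_diagonal]
  simp [sq]

open scoped ComplexOrder in
theorem IsHermitian.isDiag_of_sum_diag_sq_eq {A : Matrix n n 𝕜} (hA : A.IsHermitian)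
    (h : ∑ i, A i i ^ 2 = ∑ i, (hA.eigenvalues i : 𝕜) ^ 2) : A.IsDiag := by
  have hB : (A - diagonal A.diag).IsHermitian :=
    hA.sub (isHermitian_diagonal_iff.mpr fun i => hA.apply i i)
  rw [isDiag_iff_diagonal_diag, eq_comm, ← sub_eq_zero, ← trace_conjTranspose_mul_self_eq_zero_iff,
    hB.eq, trace_sub_diagonal_diag_mul_self, hA.trace_mul_self, h, sub_self]

end Matrix

/-- Lemma 4.3 of the paper: a Hermitian matrix whose multiset of diagonal entries
equals its multiset of eigenvalues (with multiplicity) is diagonal. -/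
theorem hermitian_diag_eq_eigenvalues_imp_diagonal
    (n : ℕ) (A : Matrix (Fin n) (Fin n) ℂ) (hA : A.IsHermitian)
    (h : (Finset.univ.val.map fun i : Fin n => A i i) =
         (Finset.univ.val.map fun i : Fin n => (hA.eigenvalues i : ℂ))) :
    ∀ i j : Fin n, i ≠ j → A i j = 0 := by
  have hsq : ∑ i, A i i ^ 2 = ∑ i, (hA.eigenvalues i : ℂ) ^ 2 := by
    simpa [Multiset.map_map, Function.comp_def, Finset.sum] using
      congrArg (fun s : Multiset ℂ => (s.map (· ^ 2)).sum) h
  exact fun i j hij => hA.isDiag_of_sum_diag_sq_eq hsq hij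
end

section
/- Let n = p + q and J = diag(I_p, −I_q) ∈ ℂ^{n×n}. A matrix X ∈ ℂ^{n×n} satisfies Xᴴ J X = J if and only if there exist a matrix W ∈ ℂ^{p×q} and unitary matrices V₊ ∈ ℂ^{p×p}, V₋ ∈ ℂ^{q×q} such that X is the block matrix X = [[(I_p + W Wᴴ)^{1/2}, W], [Wᴴ, (I_q + Wᴴ W)^{1/2}]] · diag(V₊, V₋), where (I_p + W Wᴴ)^{1/2} and (I_q + Wᴴ W)^{1/2} denote the (unique) positive semi-definite square roots of the positive definite Hermitian matrices I_p + W Wᴴ and I_q + Wᴴ W. -/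
/-!
Write `X = [[A, B], [C, D]]` in blocks. The relations `Xᴴ J X = J` and `X J Xᴴ = J` give
`A Aᴴ = 1 + B Bᴴ` and `D Dᴴ = 1 + C Cᴴ`, so `A` and `D` are invertible and have polar
decompositions `A = S V₊`, `D = T V₋`. Then `X · diag(V₊, V₋)ᴴ = [[S, W], [E, T]]` is again
`J`-unitary, now with positive semidefinite diagonal blocks, and its block relations force
`S = √(1 + W Wᴴ)`, `T = √(1 + Wᴴ W)` and `S Eᴴ = W T`. Since the square roots intertwine,
`√(1 + W Wᴴ) W = W √(1 + Wᴴ W)`, this gives `E = Wᴴ`. Conversely, the same intertwining relation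
is what makes `[[√(1 + W Wᴴ), W], [Wᴴ, √(1 + Wᴴ W)]]` itself `J`-unitary.
-/

open Matrix
open scoped ComplexOrder

noncomputable def Matrix.PosSemidef.sqrt {n 𝕜 : Type*} [Fintype n] [DecidableEq n] [RCLike 𝕜]
    {A : Matrix n n 𝕜} (hA : A.PosSemidef) : Matrix n n 𝕜 :=
  hA.1.eigenvectorUnitary.1 * diagonal ((↑) ∘ (·.sqrt) ∘ hA.1.eigenvalues) *
  (star hA.1.eigenvectorUnitary : Matrix n n 𝕜)

open LieAlgebra.Orthogonal

namespace Matrix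

namespace PosSemidef

open scoped MatrixOrder

variable {n m 𝕜 : Type*} [Fintype n] [DecidableEq n] [Fintype m] [DecidableEq m] [RCLike 𝕜]
  {A : Matrix n n 𝕜}

lemma sqrt_eq_cfcSqrt (hA : A.PosSemidef) : hA.sqrt = CFC.sqrt A := by
  rw [CFC.sqrt_eq_real_sqrt A hA.nonneg, cfcₙ_eq_cfc, hA.1.cfc_eq]
  rfl

lemma posSemidef_sqrt (hA : A.PosSemidef) : hA.sqrt.PosSemidef := by
  rw [sqrt_eq_cfcSqrt]
  exact nonneg_iff_posSemidef.mp (CFC.sqrt_nonneg A)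

lemma sqrt_mul_sqrt (hA : A.PosSemidef) : hA.sqrt * hA.sqrt = A := by
  rw [sqrt_eq_cfcSqrt]
  exact CFC.sqrt_mul_sqrt_self A hA.nonneg

lemma sqrt_eq_of_mul_self_eq {B : Matrix n n 𝕜} (hA : A.PosSemidef) (hB : B.PosSemidef)
    (h : B * B = A) : hA.sqrt = B := by
  rw [sqrt_eq_cfcSqrt]
  exact CFC.sqrt_unique h hB.nonneg

lemma isUnit_sqrt_iff (hA : A.PosSemidef) : IsUnit hA.sqrt ↔ IsUnit A := by
  rw [sqrt_eq_cfcSqrt]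
  exact CFC.isUnit_sqrt_iff A hA.nonneg

lemma commute_sqrt {B : Matrix n n 𝕜} (hA : A.PosSemidef) (h : Commute A B) :
    Commute hA.sqrt B := by
  rw [sqrt_eq_cfcSqrt, CFC.sqrt_eq_cfc]
  exact h.cfc_nnreal _

lemma fromBlocks_zero {D : Matrix m m 𝕜} (hA : A.PosSemidef) (hD : D.PosSemidef) :
    (fromBlocks A 0 0 D).PosSemidef := by
  have h : fromBlocks A 0 0 D =
      (fromBlocks hA.sqrt 0 0 hD.sqrt)ᴴ * fromBlocks hA.sqrt 0 0 hD.sqrt := by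
    simp [fromBlocks_conjTranspose, fromBlocks_multiply, hA.posSemidef_sqrt.1.eq,
      hD.posSemidef_sqrt.1.eq, hA.sqrt_mul_sqrt, hD.sqrt_mul_sqrt]
  exact h ▸ posSemidef_conjTranspose_mul_self _

lemma sqrt_fromBlocks_zero {D : Matrix m m 𝕜} (hA : A.PosSemidef) (hD : D.PosSemidef) :
    (hA.fromBlocks_zero hD).sqrt = fromBlocks hA.sqrt 0 0 hD.sqrt :=
  sqrt_eq_of_mul_self_eq _ (hA.posSemidef_sqrt.fromBlocks_zero hD.posSemidef_sqrt) <| by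
    simp [fromBlocks_multiply, hA.sqrt_mul_sqrt, hD.sqrt_mul_sqrt]

/-- `fromBlocks A 0 0 D` commutes with `fromBlocks 0 W 0 0`, hence so does its square root
`fromBlocks √A 0 0 √D`. -/
lemma sqrt_mul_eq_mul_sqrt {D : Matrix m m 𝕜} {W : Matrix n m 𝕜} (hA : A.PosSemidef)
    (hD : D.PosSemidef) (h : A * W = W * D) : hA.sqrt * W = W * hD.sqrt := by
  have hcomm : Commute (fromBlocks A 0 0 D) (fromBlocks 0 W 0 0) := by
    simp [Commute, SemiconjBy, fromBlocks_multiply, h]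
  have := ((hA.fromBlocks_zero hD).commute_sqrt hcomm).eq
  rw [sqrt_fromBlocks_zero, fromBlocks_multiply, fromBlocks_multiply] at this
  simpa using congrArg toBlocks₁₂ this

end PosSemidef

theorem indefiniteDiagonal_eq_fromBlocks {m l R : Type*} [DecidableEq m] [DecidableEq l]
    [CommRing R] : indefiniteDiagonal m l R = fromBlocks 1 0 0 (-1) := by
  rw [indefiniteDiagonal, ← fromBlocks_diagonal, diagonal_one, ← diagonal_neg]
  rfl

section IndefiniteUnitary

variable (m l R : Type*) [Fintype m] [Fintype l] [DecidableEq m] [DecidableEq l] [CommRing R]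
  [StarRing R]

def indefiniteUnitary : Submonoid (Matrix (m ⊕ l) (m ⊕ l) R) where
  carrier := {Y | Yᴴ * indefiniteDiagonal m l R * Y = indefiniteDiagonal m l R}
  mul_mem' {X Y} hX hY := by
    simp only [Set.mem_ofPred_eq, conjTranspose_mul] at *
    calc Yᴴ * Xᴴ * indefiniteDiagonal m l R * (X * Y)
        = Yᴴ * (Xᴴ * indefiniteDiagonal m l R * X) * Y := by simp only [Matrix.mul_assoc]
      _ = _ := by rw [hX, hY]
  one_mem' := by simp

variable {m l R}

theorem mem_indefiniteUnitary_iff {Y : Matrix (m ⊕ l) (m ⊕ l) R} :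
    Y ∈ indefiniteUnitary m l R ↔ Yᴴ * indefiniteDiagonal m l R * Y = indefiniteDiagonal m l R :=
  Iff.rfl

theorem fromBlocks_mem_indefiniteUnitary_iff {A : Matrix m m R} {B : Matrix m l R}
    {C : Matrix l m R} {D : Matrix l l R} :
    fromBlocks A B C D ∈ indefiniteUnitary m l R ↔
      Aᴴ * A - Cᴴ * C = 1 ∧ Aᴴ * B - Cᴴ * D = 0 ∧ Bᴴ * A - Dᴴ * C = 0 ∧
        Bᴴ * B - Dᴴ * D = -1 := by
  simp [mem_indefiniteUnitary_iff, indefiniteDiagonal_eq_fromBlocks, fromBlocks_conjTranspose,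
    fromBlocks_multiply, sub_eq_add_neg]

/-- `Yᴴ J Y = J` says that `J Yᴴ J` is a left, hence a right, inverse of `Y`. -/
theorem conjTranspose_mem_indefiniteUnitary {Y : Matrix (m ⊕ l) (m ⊕ l) R}
    (hY : Y ∈ indefiniteUnitary m l R) : Yᴴ ∈ indefiniteUnitary m l R := by
  set J := indefiniteDiagonal m l R
  have hJ : J * J = 1 := by
    simp [J, indefiniteDiagonal_eq_fromBlocks, fromBlocks_multiply, ← fromBlocks_one]
  have hinv : Y * (J * Yᴴ * J) = 1 := mul_eq_one_comm.mp <| by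
    rw [mem_indefiniteUnitary_iff] at hY
    simp only [Matrix.mul_assoc] at hY ⊢
    rw [hY, hJ]
  rw [mem_indefiniteUnitary_iff, conjTranspose_conjTranspose]
  calc Y * J * Yᴴ = Y * (J * Yᴴ * J) * J := by simp only [Matrix.mul_assoc, hJ, Matrix.mul_one]
    _ = J := by rw [hinv, Matrix.one_mul]

theorem fromBlocks_mem_indefiniteUnitary_of_mem_unitary {U : Matrix m m R} {V : Matrix l l R}
    (hU : U ∈ unitary (Matrix m m R)) (hV : V ∈ unitary (Matrix l l R)) :
    fromBlocks U 0 0 V ∈ indefiniteUnitary m l R := by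
  simp [fromBlocks_mem_indefiniteUnitary_iff, ← star_eq_conjTranspose,
    Unitary.star_mul_self_of_mem hU, Unitary.star_mul_self_of_mem hV]

end IndefiniteUnitary

section Hyperbolic

variable {m l 𝕜 : Type*} [Fintype m] [Fintype l] [RCLike 𝕜] [DecidableEq m]

theorem isUnit_of_mul_conjTranspose_eq_one_add {A : Matrix m m 𝕜} {B : Matrix m l 𝕜}
    (h : A * Aᴴ = 1 + B * Bᴴ) : IsUnit A :=
  isUnit_of_mul_isUnit_left <|
    h ▸ (PosDef.one.add_posSemidef (posSemidef_self_mul_conjTranspose B)).isUnit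

theorem exists_posSemidef_mem_unitary_eq_mul {A : Matrix m m 𝕜} (hA : IsUnit A) :
    ∃ S U, S.PosSemidef ∧ U ∈ unitary (Matrix m m 𝕜) ∧ A = S * U := by
  have h := posSemidef_self_mul_conjTranspose A
  have hS : IsUnit h.sqrt := h.isUnit_sqrt_iff.2 (hA.mul ((isUnit_conjTranspose A).2 hA))
  have hdet := (isUnit_iff_isUnit_det _).1 hS
  have hSinv : (h.sqrt⁻¹)ᴴ = h.sqrt⁻¹ := by rw [conjTranspose_nonsing_inv, h.posSemidef_sqrt.1.eq]
  refine ⟨h.sqrt, h.sqrt⁻¹ * A, h.posSemidef_sqrt, ?_, (mul_nonsing_inv_cancel_left _ _ hdet).symm⟩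
  rw [mem_unitaryGroup_iff, star_eq_conjTranspose, conjTranspose_mul, hSinv]
  calc h.sqrt⁻¹ * A * (Aᴴ * h.sqrt⁻¹) = h.sqrt⁻¹ * (h.sqrt * h.sqrt) * h.sqrt⁻¹ := by
        rw [h.sqrt_mul_sqrt]; simp only [Matrix.mul_assoc]
    _ = 1 := by rw [Matrix.mul_assoc, mul_nonsing_inv_cancel_right _ _ hdet, nonsing_inv_mul _ hdet]

theorem posSemidef_one_add_mul_conjTranspose (W : Matrix m l 𝕜) : (1 + W * Wᴴ).PosSemidef :=
  PosSemidef.one.add (posSemidef_self_mul_conjTranspose W)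

theorem posSemidef_one_add_conjTranspose_mul (W : Matrix l m 𝕜) : (1 + Wᴴ * W).PosSemidef :=
  PosSemidef.one.add (posSemidef_conjTranspose_mul_self W)

variable [DecidableEq l]

noncomputable def hyperbolicFactor (W : Matrix m l 𝕜) : Matrix (m ⊕ l) (m ⊕ l) 𝕜 :=
  fromBlocks (posSemidef_one_add_mul_conjTranspose W).sqrt W Wᴴ
    (posSemidef_one_add_conjTranspose_mul W).sqrt

theorem sqrt_one_add_mul_conjTranspose_mul (W : Matrix m l 𝕜) (h₁ : (1 + W * Wᴴ).PosSemidef)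
    (h₂ : (1 + Wᴴ * W).PosSemidef) : h₁.sqrt * W = W * h₂.sqrt :=
  h₁.sqrt_mul_eq_mul_sqrt h₂ <| by simp only [Matrix.add_mul, Matrix.mul_add, Matrix.one_mul,
    Matrix.mul_one, Matrix.mul_assoc]

theorem hyperbolicFactor_mem_indefiniteUnitary (W : Matrix m l 𝕜) :
    hyperbolicFactor W ∈ indefiniteUnitary m l 𝕜 := by
  set h₁ := posSemidef_one_add_mul_conjTranspose W
  set h₂ := posSemidef_one_add_conjTranspose_mul W
  have hcomm := sqrt_one_add_mul_conjTranspose_mul W h₁ h₂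
  have hcomm' : Wᴴ * h₁.sqrt = h₂.sqrt * Wᴴ := by
    simpa [h₁.posSemidef_sqrt.1.eq, h₂.posSemidef_sqrt.1.eq] using congrArg conjTranspose hcomm
  simp [hyperbolicFactor, fromBlocks_mem_indefiniteUnitary_iff, h₁.posSemidef_sqrt.1.eq,
    h₂.posSemidef_sqrt.1.eq, h₁.sqrt_mul_sqrt, h₂.sqrt_mul_sqrt, hcomm, hcomm']

theorem fromBlocks_eq_hyperbolicFactor_of_mem {S : Matrix m m 𝕜} {W : Matrix m l 𝕜}
    {E : Matrix l m 𝕜} {T : Matrix l l 𝕜} (hS : S.PosSemidef) (hT : T.PosSemidef)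
    (h : fromBlocks S W E T ∈ indefiniteUnitary m l 𝕜) :
    fromBlocks S W E T = hyperbolicFactor W := by
  set h₁ := posSemidef_one_add_mul_conjTranspose W
  set h₂ := posSemidef_one_add_conjTranspose_mul W
  obtain ⟨-, -, -, h₂₂⟩ := fromBlocks_mem_indefiniteUnitary_iff.1 h
  obtain ⟨h₁₁, h₁₂, -, -⟩ := fromBlocks_mem_indefiniteUnitary_iff.1 <| by
    simpa [fromBlocks_conjTranspose] using conjTranspose_mem_indefiniteUnitary h
  simp only [conjTranspose_conjTranspose] at h₁₁ h₁₂
  have hSS : S * Sᴴ = 1 + W * Wᴴ := sub_eq_iff_eq_add.1 h₁₁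
  have hSdet : IsUnit S.det :=
    (isUnit_iff_isUnit_det S).1 (isUnit_of_mul_conjTranspose_eq_one_add hSS)
  have hTT : Tᴴ * T = 1 + Wᴴ * W := by
    rw [← neg_sub, neg_inj] at h₂₂
    exact sub_eq_iff_eq_add.1 h₂₂
  rw [hS.1.eq] at hSS
  rw [hT.1.eq] at hTT h₁₂
  have hS₁ : h₁.sqrt = S := h₁.sqrt_eq_of_mul_self_eq hS hSS
  have hT₂ : h₂.sqrt = T := h₂.sqrt_eq_of_mul_self_eq hT hTT
  have hSE : S * Eᴴ = S * W := by
    rw [sub_eq_zero.1 h₁₂, ← hS₁, ← hT₂, sqrt_one_add_mul_conjTranspose_mul]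
  have hE : E = Wᴴ := by
    rw [← conjTranspose_conjTranspose E, ← nonsing_inv_mul_cancel_left S Eᴴ hSdet, hSE,
      nonsing_inv_mul_cancel_left S W hSdet]
  rw [hyperbolicFactor, hE, hS₁, hT₂]

theorem mem_indefiniteUnitary_iff_exists_hyperbolicFactor {Y : Matrix (m ⊕ l) (m ⊕ l) 𝕜} :
    Y ∈ indefiniteUnitary m l 𝕜 ↔ ∃ W, ∃ U ∈ unitary (Matrix m m 𝕜),
      ∃ V ∈ unitary (Matrix l l 𝕜), Y = hyperbolicFactor W * fromBlocks U 0 0 V := by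
  refine ⟨fun hY => ?_, ?_⟩
  · obtain ⟨A, B, C, D, rfl⟩ : ∃ A B C D, Y = fromBlocks A B C D :=
      ⟨_, _, _, _, (fromBlocks_toBlocks Y).symm⟩
    obtain ⟨hA, -, -, hD⟩ := fromBlocks_mem_indefiniteUnitary_iff.1 <| by
      simpa [fromBlocks_conjTranspose] using conjTranspose_mem_indefiniteUnitary hY
    simp only [conjTranspose_conjTranspose] at hA hD
    rw [← neg_sub, neg_inj] at hD
    obtain ⟨S, U, hS, hU, rfl⟩ := exists_posSemidef_mem_unitary_eq_mul
      (isUnit_of_mul_conjTranspose_eq_one_add (sub_eq_iff_eq_add.1 hA))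
    obtain ⟨T, V, hT, hV, rfl⟩ := exists_posSemidef_mem_unitary_eq_mul
      (isUnit_of_mul_conjTranspose_eq_one_add (sub_eq_iff_eq_add.1 hD))
    have hZ : fromBlocks (S * U) B C (T * V) * fromBlocks (star U) 0 0 (star V)
        = fromBlocks S (B * star V) (C * star U) T := by
      simp [fromBlocks_multiply, Matrix.mul_assoc, Unitary.mul_star_self_of_mem hU,
        Unitary.mul_star_self_of_mem hV]
    have hZmem := mul_mem hY
      (fromBlocks_mem_indefiniteUnitary_of_mem_unitary (Unitary.star_mem hU)
        (Unitary.star_mem hV))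
    refine ⟨B * star V, U, hU, V, hV, ?_⟩
    rw [hZ] at hZmem
    rw [← fromBlocks_eq_hyperbolicFactor_of_mem hS hT hZmem]
    simp [fromBlocks_multiply, Matrix.mul_assoc, Unitary.star_mul_self_of_mem hU,
      Unitary.star_mul_self_of_mem hV]
  · rintro ⟨W, U, hU, V, hV, rfl⟩
    exact mul_mem (hyperbolicFactor_mem_indefiniteUnitary W)
      (fromBlocks_mem_indefiniteUnitary_of_mem_unitary hU hV)

end Hyperbolic

theorem reindex_finSumFinEquiv_indefiniteDiagonal (p q : ℕ) (R : Type*) [CommRing R] :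
    reindex finSumFinEquiv finSumFinEquiv (indefiniteDiagonal (Fin p) (Fin q) R)
      = diagonal fun i : Fin (p + q) => if (i : ℕ) < p then 1 else -1 := by
  rw [indefiniteDiagonal, reindex_apply, submatrix_diagonal_equiv]
  congr 1
  funext i
  induction i using Fin.addCases <;> simp

theorem conjTranspose_reindex_mul_mul {n o R : Type*} [Fintype n] [Fintype o] [Semiring R]
    [StarRing R] (e : n ≃ o) (X J : Matrix n n R) :
    (reindex e e X)ᴴ * reindex e e J * reindex e e X = reindex e e (Xᴴ * J * X) := by
  simp [reindex_apply, submatrix_mul_equiv]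

end Matrix

/-- Lemma 5.2 of the paper (hyperbolic polar decomposition): for
`J = diag(I_p, -I_q)`, a matrix `X` satisfies `Xᴴ J X = J` if and only if
`X = [[(I + W Wᴴ)^{1/2}, W], [Wᴴ, (I + Wᴴ W)^{1/2}]] · diag(V₊, V₋)`
for some `W ∈ ℂ^{p×q}` and unitary `V₊ ∈ ℂ^{p×p}`, `V₋ ∈ ℂ^{q×q}`, where the square
roots are the unique positive semi-definite square roots. -/
theorem hyperbolic_polar_decomposition
    (p q : ℕ)
    (J : Matrix (Fin (p + q)) (Fin (p + q)) ℂ)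
    (hJ : J = Matrix.diagonal fun i : Fin (p + q) => if (i : ℕ) < p then (1 : ℂ) else -1)
    (X : Matrix (Fin (p + q)) (Fin (p + q)) ℂ) :
    Xᴴ * J * X = J ↔
    ∃ (W : Matrix (Fin p) (Fin q) ℂ)
      (Vp : Matrix (Fin p) (Fin p) ℂ) (Vm : Matrix (Fin q) (Fin q) ℂ),
      Vpᴴ * Vp = 1 ∧ Vp * Vpᴴ = 1 ∧ Vmᴴ * Vm = 1 ∧ Vm * Vmᴴ = 1 ∧
      ∃ (h₁ : (1 + W * Wᴴ).PosSemidef) (h₂ : (1 + Wᴴ * W).PosSemidef),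
        X = Matrix.reindex finSumFinEquiv finSumFinEquiv
              (Matrix.fromBlocks h₁.sqrt W Wᴴ h₂.sqrt *
               Matrix.fromBlocks Vp 0 0 Vm) := by
  obtain ⟨Y, rfl⟩ := (reindex finSumFinEquiv finSumFinEquiv).surjective X
  rw [hJ, ← reindex_finSumFinEquiv_indefiniteDiagonal, conjTranspose_reindex_mul_mul,
    (reindex _ _).injective.eq_iff, ← mem_indefiniteUnitary_iff,
    mem_indefiniteUnitary_iff_exists_hyperbolicFactor]
  simp only [(reindex _ _).injective.eq_iff, Unitary.mem_iff, star_eq_conjTranspose]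
  constructor
  · rintro ⟨W, U, ⟨hU₁, hU₂⟩, V, ⟨hV₁, hV₂⟩, rfl⟩
    exact ⟨W, U, V, hU₁, hU₂, hV₁, hV₂, posSemidef_one_add_mul_conjTranspose W,
      posSemidef_one_add_conjTranspose_mul W, rfl⟩
  · rintro ⟨W, U, V, hU₁, hU₂, hV₁, hV₂, -, -, rfl⟩
    exact ⟨W, U, ⟨hU₁, hU₂⟩, V, ⟨hV₁, hV₂⟩, rfl⟩
end
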